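/- arXiv:2204.13288 — 7 statements merged into one kernel-verified Lean document; each statement's English description precedes it below -/
import Mathlib

section
/- Let n ≥ 1 and suppose g is C^∞ on an open neighborhood of (x̄₁, w̄) ∈ ℝ × ℝ^{n−1} with ∂₁²g(x̄₁,w̄) = 0 and ∂₁³g(x̄₁,w̄) ≠ 0. Then there exist an open neighborhood N of (x̄₁,w̄), an open neighborhood U₂ ∋ w̄ in ℝ^{n−1}, a C^∞ function f : U₂ → ℝ with f(w̄) = x̄₁ whose graph describes the singular set, i.e. {(x₁,w) ∈ N : ∂₁²g(x₁,w) = 0} = {(f(w), w) : w ∈ U₂} ∩ N, and C^∞ functions φ₁, φ₂ on N and k₁, k₂ on U₂ such that for all (x₁,w) ∈ N: P(x₁,w) = (x₁ − f(w))²·φ₁(x₁,w) + k₁(w) and Z(x₁,w) = (x₁ − f(w))²·φ₂(x₁,w) + k₂(w), with φ₁(x̄₁,w̄) ≠ 0. -/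
/-!
Statement 1: the division step in the proof of Theorem 3.3 (Malgrange division,
quadratic form along the singular set).  Here `m` plays the role of `n - 1`,
`pd1` is the partial derivative in the first variable, `Pfun g = ∂g/∂x₁` and
`Zfun g = x₁ ∂g/∂x₁ - g`.
-/

/-- Partial derivative in the first variable. -/
noncomputable def pd1 {m : ℕ} (g : ℝ × (Fin m → ℝ) → ℝ) : ℝ × (Fin m → ℝ) → ℝ :=
  fun q => deriv (fun t => g (t, q.2)) q.1

/-- The affine flat coordinate `p₁` of the m-wavefront. -/
noncomputable def Pfun {m : ℕ} (g : ℝ × (Fin m → ℝ) → ℝ) : ℝ × (Fin m → ℝ) → ℝ :=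
  pd1 g

/-- The dual potential `z' = x₁ ∂g/∂x₁ - g` of the m-wavefront. -/
noncomputable def Zfun {m : ℕ} (g : ℝ × (Fin m → ℝ) → ℝ) : ℝ × (Fin m → ℝ) → ℝ :=
  fun q => q.1 * pd1 g q - g q

/-!
By the implicit function theorem, applied through the local inverse of `(x₁, w) ↦ (∂₁²g, w)`,
the condition `∂₁³g ≠ 0` makes the singular set `{∂₁²g = 0}` the graph `x₁ = f w` of a smooth
function. Along this graph both `∂₁P = ∂₁²g` and `∂₁Z = x₁ ∂₁²g` vanish, so Taylor's formula with
integral remainder in `x₁` around `f w` gives, for `F = P, Z`,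
`F (x₁, w) = F (f w, w) + (x₁ - f w)² ∫₀¹ (1 - t) ∂₁²F (f w + t (x₁ - f w), w) dt`.
The remainder is smooth by differentiation under the integral sign, and for `F = P` it equals
`∂₁³g / 2 ≠ 0` at the base point.
-/

open Set Filter Topology ContinuousLinearMap
open scoped ContDiff

section PartialDerivative

variable {m : ℕ} {F : ℝ × (Fin m → ℝ) → ℝ} {q : ℝ × (Fin m → ℝ)}

theorem DifferentiableAt.hasDerivAt_fderiv_apply_one_zero (hF : DifferentiableAt ℝ F q) :
    HasDerivAt (fun t => F (t, q.2)) (fderiv ℝ F q (1, 0)) q.1 :=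
  hF.hasFDerivAt.comp_hasDerivAt q.1 ((hasDerivAt_id q.1).prodMk (hasDerivAt_const _ _))

theorem DifferentiableAt.pd1_eq (hF : DifferentiableAt ℝ F q) :
    pd1 F q = fderiv ℝ F q (1, 0) :=
  hF.hasDerivAt_fderiv_apply_one_zero.deriv

theorem DifferentiableAt.hasDerivAt_pd1 (hF : DifferentiableAt ℝ F q) :
    HasDerivAt (fun t => F (t, q.2)) (pd1 F q) q.1 :=
  hF.pd1_eq ▸ hF.hasDerivAt_fderiv_apply_one_zero

variable {W : Set (ℝ × (Fin m → ℝ))}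

theorem ContDiffOn.pd1_eq_fderiv (hF : ContDiffOn ℝ ∞ F W) (hW : IsOpen W) (hq : q ∈ W) :
    pd1 F q = fderiv ℝ F q (1, 0) :=
  ((hF.contDiffAt (hW.mem_nhds hq)).differentiableAt (by simp)).pd1_eq

theorem ContDiffOn.pd1 (hF : ContDiffOn ℝ ∞ F W) (hW : IsOpen W) : ContDiffOn ℝ ∞ (pd1 F) W :=
  ((apply ℝ ℝ ((1 : ℝ), (0 : Fin m → ℝ))).contDiff.comp_contDiffOn
    (hF.fderiv_of_isOpen hW le_rfl)).congr fun _ hq => hF.pd1_eq_fderiv hW hq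

theorem pd1_Zfun {g : ℝ × (Fin m → ℝ) → ℝ} (hg : ContDiffOn ℝ ∞ g W) (hW : IsOpen W)
    (hq : q ∈ W) : pd1 (Zfun g) q = q.1 * pd1 (pd1 g) q := by
  have hdiff : ∀ {G : ℝ × (Fin m → ℝ) → ℝ}, ContDiffOn ℝ ∞ G W → DifferentiableAt ℝ G q :=
    fun hG => (hG.contDiffAt (hW.mem_nhds hq)).differentiableAt (by simp)
  have hZ := ((hasDerivAt_id q.1).mul (hdiff (hg.pd1 hW)).hasDerivAt_pd1).sub
    (hdiff hg).hasDerivAt_pd1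
  rw [show pd1 (Zfun g) q = _ from hZ.deriv]
  simp only [id, one_mul, add_sub_cancel_left]

end PartialDerivative

namespace OpenPartialHomeomorph

variable {E : Type*} [TopologicalSpace E] {h : ℝ × E → ℝ}
  (Φ : OpenPartialHomeomorph (ℝ × E) (ℝ × E))

theorem symm_zero_prod (hΦ : ∀ q, Φ q = (h q, q.2)) {w : E} (hw : (0, w) ∈ Φ.target) :
    (Φ.symm (0, w)).2 = w ∧ h (Φ.symm (0, w)) = 0 := by
  have h := Φ.right_inv hw
  rw [hΦ, Prod.ext_iff] at h
  exact h.symm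

theorem mem_target_and_symm_eq_of_apply_eq_zero (hΦ : ∀ q, Φ q = (h q, q.2)) {q : ℝ × E}
    (hq : q ∈ Φ.source) (h₀ : h q = 0) : (0, q.2) ∈ Φ.target ∧ Φ.symm (0, q.2) = q := by
  have hΦq : Φ q = (0, q.2) := by rw [hΦ, h₀]
  exact ⟨hΦq ▸ Φ.map_source hq, hΦq ▸ Φ.left_inv hq⟩

end OpenPartialHomeomorph

section ImplicitFunction

variable {E : Type*} [NormedAddCommGroup E] [NormedSpace ℝ E]

theorem ContinuousLinearMap.apply_prod_eq (L : ℝ × E →L[ℝ] ℝ) (u : ℝ) (v : E) :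
    L (u, v) = u * L (1, 0) + L (0, v) := by
  rw [← smul_eq_mul, ← map_smul, ← map_add, Prod.smul_mk, smul_eq_mul, mul_one, smul_zero,
    Prod.mk_add_mk, add_zero, zero_add]

/-- The shear `(u, v) ↦ (L (u, v), v)`, with inverse `(s, v) ↦ ((s - L (0, v)) / L (1, 0), v)`. -/
noncomputable def ContinuousLinearMap.prodSndEquiv (L : ℝ × E →L[ℝ] ℝ) (hL : L (1, 0) ≠ 0) :
    (ℝ × E) ≃L[ℝ] (ℝ × E) :=
  ContinuousLinearEquiv.equivOfInverse (L.prod (snd ℝ ℝ E))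
    (((L (1, 0))⁻¹ • (fst ℝ ℝ E - L.comp ((inr ℝ ℝ E).comp (snd ℝ ℝ E)))).prod (snd ℝ ℝ E))
    (fun ⟨u, v⟩ => by
      have h := L.apply_prod_eq u v
      simp [Prod.ext_iff, h]
      field_simp)
    (fun ⟨s, v⟩ => by
      have h := L.apply_prod_eq ((L (1, 0))⁻¹ * (s - L (0, v))) v
      simp [Prod.ext_iff, h]
      field_simp
      ring)

theorem HasFDerivAt.prodMk_snd {h : ℝ × E → ℝ} {L : ℝ × E →L[ℝ] ℝ} {q : ℝ × E}
    (hh : HasFDerivAt h L q) (hL : L (1, 0) ≠ 0) :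
    HasFDerivAt (fun p => (h p, p.2)) (L.prodSndEquiv hL : ℝ × E →L[ℝ] ℝ × E) q :=
  hh.prodMk hasFDerivAt_snd

variable [CompleteSpace E]

theorem exists_contDiffOn_implicit {h : ℝ × E → ℝ} {W : Set (ℝ × E)} (hW : IsOpen W)
    (hh : ContDiffOn ℝ ∞ h W) {x₀ : ℝ} {w₀ : E} (hq₀ : (x₀, w₀) ∈ W) (h₀ : h (x₀, w₀) = 0)
    (hx₀ : fderiv ℝ h (x₀, w₀) (1, 0) ≠ 0) :
    ∃ (f : E → ℝ) (U : Set E) (S : Set (ℝ × E)), IsOpen U ∧ w₀ ∈ U ∧ ContDiffOn ℝ ∞ f U ∧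
      f w₀ = x₀ ∧ IsOpen S ∧ S ⊆ W ∧ (∀ w ∈ U, (f w, w) ∈ S) ∧
      ∀ q ∈ S, h q = 0 ↔ ∃ w ∈ U, q = (f w, w) := by
  -- the open set where `Φ` below has invertible derivative, so that its local inverse is smooth
  set W' := W ∩ {q | fderiv ℝ h q (1, 0) ≠ 0}
  have hW' : IsOpen W' :=
    ((apply ℝ ℝ ((1 : ℝ), (0 : E))).continuous.comp_continuousOn
      (hh.continuousOn_fderiv_of_isOpen hW (by simp))).isOpen_inter_preimage hW
      isOpen_compl_singleton
  set Φ : ℝ × E → ℝ × E := fun q => (h q, q.2)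
  have hΦ : ∀ q ∈ W, ContDiffAt ℝ ∞ Φ q := fun q hq =>
    (hh.contDiffAt (hW.mem_nhds hq)).prodMk contDiffAt_snd
  have hΦ' : ∀ q (hq : q ∈ W'), HasFDerivAt Φ _ q := fun q hq =>
    ((hΦ q hq.1).fst.differentiableAt (by simp)).hasFDerivAt.prodMk_snd hq.2
  let PH := (hΦ _ hq₀).toOpenPartialHomeomorph Φ (hΦ' _ ⟨hq₀, hx₀⟩) (by simp)
  have hPH : ∀ q, PH q = (h q, q.2) := fun _ => rfl
  obtain ⟨htarget₀, hPH₀⟩ := PH.mem_target_and_symm_eq_of_apply_eq_zero hPH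
    ((hΦ _ hq₀).mem_toOpenPartialHomeomorph_source _ _) h₀
  set f : E → ℝ := fun w => (PH.symm (0, w)).1
  set U := {w | ((0 : ℝ), w) ∈ PH.target ∩ PH.symm ⁻¹' W'}
  have hsymm : ∀ w, (0, w) ∈ PH.target → PH.symm (0, w) = (f w, w) := fun w hw =>
    Prod.ext rfl (PH.symm_zero_prod hPH hw).1
  have hsmooth : ContDiffOn ℝ ∞ PH.symm (PH.target ∩ PH.symm ⁻¹' W') := fun y hy =>
    (PH.contDiffAt_symm hy.1 (hΦ' _ hy.2) (hΦ _ hy.2.1)).contDiffWithinAt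
  refine ⟨f, U, PH.source ∩ W', (PH.isOpen_inter_preimage_symm hW').preimage (by fun_prop),
    ⟨htarget₀, by rw [mem_preimage, hPH₀]; exact ⟨hq₀, hx₀⟩⟩,
    contDiff_fst.comp_contDiffOn (hsmooth.comp (by fun_prop) fun w hw => hw), by simp [f, hPH₀],
    PH.open_source.inter hW', fun q hq => hq.2.1,
    fun w hw => hsymm w hw.1 ▸ ⟨PH.map_target hw.1, hw.2⟩, fun q hq => ⟨fun hq₀ => ?_, ?_⟩⟩
  · obtain ⟨htarget, hq'⟩ := PH.mem_target_and_symm_eq_of_apply_eq_zero hPH hq.1 hq₀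
    refine ⟨q.2, ⟨htarget, ?_⟩, hq'.symm.trans (hsymm _ htarget)⟩
    rw [mem_preimage, hq']
    exact hq.2
  · rintro ⟨w, hw, rfl⟩
    exact hsymm w hw.1 ▸ (PH.symm_zero_prod hPH hw.1).2

end ImplicitFunction

theorem eventually_forall_segment_mem {E : Type*} [TopologicalSpace E] {f : E → ℝ} {w₀ : E}
    (hf : ContinuousAt f w₀) {W : Set (ℝ × E)} (hW : IsOpen W) (hW₀ : (f w₀, w₀) ∈ W) :
    ∀ᶠ q in 𝓝 (f w₀, w₀), ∀ t ∈ Icc (0 : ℝ) 1, (f q.2 + t * (q.1 - f q.2), q.2) ∈ W := by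
  refine isCompact_Icc.eventually_forall_of_forall_eventually fun t _ => ?_
  have hσ : ContinuousAt (fun p : (ℝ × E) × ℝ => (f p.1.2 + p.2 * (p.1.1 - f p.1.2), p.1.2))
      ((f w₀, w₀), t) := by
    have hf' : ContinuousAt (fun p : (ℝ × E) × ℝ => f p.1.2) ((f w₀, w₀), t) :=
      hf.comp continuousAt_fst.snd
    fun_prop
  exact hσ.eventually_mem (hW.mem_nhds (by simpa using hW₀))

theorem integral_one_sub_mul_eq_of_hasDerivAt {v v' v'' : ℝ → ℝ}
    (hv : ∀ t ∈ Icc (0 : ℝ) 1, HasDerivAt v (v' t) t)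
    (hv' : ∀ t ∈ Icc (0 : ℝ) 1, HasDerivAt v' (v'' t) t) (hv'' : ContinuousOn v'' (Icc 0 1)) :
    ∫ t in (0 : ℝ)..1, (1 - t) * v'' t = v 1 - v 0 - v' 0 := by
  have hG : ∀ t ∈ uIcc (0 : ℝ) 1,
      HasDerivAt (fun s => v s + (1 - s) * v' s) ((1 - t) * v'' t) t := by
    intro t ht
    rw [uIcc_of_le zero_le_one] at ht
    exact ((hv t ht).add (((hasDerivAt_id' t).const_sub 1).mul (hv' t ht))).congr_deriv (by ring)
  rw [intervalIntegral.integral_eq_sub_of_hasDerivAt hG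
    (((continuousOn_const.sub continuousOn_id).mul hv'').intervalIntegrable_of_Icc zero_le_one)]
  ring

section ParametricIntegral

universe u

variable {H F : Type u} [NormedAddCommGroup H] [NormedSpace ℝ H] [NormedAddCommGroup F]
  [NormedSpace ℝ F] {a b : ℝ} {O : Set H}

theorem hasFDerivAt_intervalIntegral_of_contDiffAt {K : ℝ × H → F} (hO : IsOpen O)
    (hK : ∀ t ∈ uIcc a b, ∀ x ∈ O, ContDiffAt ℝ 1 K (t, x)) {x₀ : H} (hx₀ : x₀ ∈ O) :
    HasFDerivAt (fun x => ∫ t in a..b, K (t, x))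
      (∫ t in a..b, fderiv ℝ K (t, x₀) ∘L inr ℝ ℝ H) x₀ := by
  set K' : ℝ × H → H →L[ℝ] F := fun p => fderiv ℝ K p ∘L inr ℝ ℝ H
  have hK' : ∀ t ∈ uIcc a b, ∀ x ∈ O, HasFDerivAt (fun y => K (t, y)) (K' (t, x)) x :=
    fun t ht x hx => ((hK t ht x hx).differentiableAt one_ne_zero).hasFDerivAt.comp x
      (hasFDerivAt_prodMk_right t x)
  have hK'cont : ∀ t ∈ uIcc a b, ∀ x ∈ O, ContinuousAt K' (t, x) := fun t ht x hx =>
    ((compL ℝ H (ℝ × H) F).flip (inr ℝ ℝ H)).continuous.continuousAt.comp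
      ((hK t ht x hx).continuousAt_fderiv one_ne_zero)
  have hKcont : ∀ x ∈ O, ContinuousOn (fun t => K (t, x)) (uIcc a b) := fun x hx t ht =>
    ((hK t ht x hx).continuousAt.comp (f := fun s => (s, x)) (by fun_prop)).continuousWithinAt
  have hK'cont₀ : ContinuousOn (fun t => K' (t, x₀)) (uIcc a b) := fun t ht =>
    ((hK'cont t ht x₀ hx₀).comp (f := fun s => (s, x₀)) (by fun_prop)).continuousWithinAt
  obtain ⟨C, hC⟩ := isCompact_uIcc.exists_bound_of_continuousOn hK'cont₀
  have hbound : ∀ᶠ x in 𝓝 x₀, ∀ t ∈ uIcc a b, ‖K' (t, x)‖ < C + 1 := by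
    refine isCompact_uIcc.eventually_forall_of_forall_eventually fun t ht => ?_
    have hcont : ContinuousAt (fun z : H × ℝ => ‖K' (z.2, z.1)‖) (x₀, t) :=
      ((hK'cont t ht x₀ hx₀).comp_of_eq continuous_swap.continuousAt rfl).norm
    exact hcont.eventually_lt continuousAt_const (by linarith [hC t ht])
  exact intervalIntegral.hasFDerivAt_integral_of_dominated_of_fderiv_le (F := fun x t => K (t, x))
    (F' := fun x t => K' (t, x)) (bound := fun _ => C + 1)
    (inter_mem (hO.mem_nhds hx₀) hbound)
    (eventually_of_mem (hO.mem_nhds hx₀) fun x hx =>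
      ((hKcont x hx).mono uIoc_subset_uIcc).aestronglyMeasurable measurableSet_uIoc)
    ((hKcont x₀ hx₀).intervalIntegrable)
    ((hK'cont₀.mono uIoc_subset_uIcc).aestronglyMeasurable measurableSet_uIoc)
    (Eventually.of_forall fun t ht x hx => (hx.2 t (uIoc_subset_uIcc ht)).le)
    intervalIntegrable_const
    (Eventually.of_forall fun t ht x hx => hK' t (uIoc_subset_uIcc ht) x hx.1)

theorem contDiffOn_intervalIntegral_of_contDiffAt (hO : IsOpen O) (n : ℕ) {K : ℝ × H → F}
    (hK : ∀ t ∈ uIcc a b, ∀ x ∈ O, ContDiffAt ℝ (n + 1) K (t, x)) :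
    ContDiffOn ℝ n (fun x => ∫ t in a..b, K (t, x)) O := by
  induction n generalizing F with
  | zero =>
    have hderiv := fun x (hx : x ∈ O) => hasFDerivAt_intervalIntegral_of_contDiffAt hO
      (fun t ht y hy => (hK t ht y hy).of_le le_add_self) hx
    rw [Nat.cast_zero, contDiffOn_zero]
    exact fun x hx => (hderiv x hx).continuousAt.continuousWithinAt
  | succ n ih =>
    have hderiv := fun x (hx : x ∈ O) => hasFDerivAt_intervalIntegral_of_contDiffAt hO
      (fun t ht y hy => (hK t ht y hy).of_le le_add_self) hx
    rw [Nat.cast_add, Nat.cast_one, contDiffOn_succ_iff_fderiv_of_isOpen hO]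
    refine ⟨fun x hx => (hderiv x hx).differentiableAt.differentiableWithinAt, by simp, ?_⟩
    refine (ih (K := fun p => fderiv ℝ K p ∘L inr ℝ ℝ H) fun t ht x hx => ?_).congr
      fun x hx => (hderiv x hx).fderiv
    exact ((compL ℝ H (ℝ × H) F).flip (inr ℝ ℝ H)).contDiff.contDiffAt.comp _
      ((hK t ht x hx).fderiv_right (by push_cast; rfl))

end ParametricIntegral

section Division

variable {m : ℕ}

/-- The integral remainder of Taylor's formula at order two along the segment from `(f w, w)` to
`(x, w)`, i.e. `(F (x, w) - F (f w, w) - ∂₁F (f w, w) (x - f w)) / (x - f w) ^ 2`, extended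
smoothly across the graph of `f`. -/
noncomputable def taylorQuotient (F : ℝ × (Fin m → ℝ) → ℝ) (f : (Fin m → ℝ) → ℝ)
    (q : ℝ × (Fin m → ℝ)) : ℝ :=
  ∫ t in (0 : ℝ)..1, (1 - t) * pd1 (pd1 F) (f q.2 + t * (q.1 - f q.2), q.2)

theorem taylorQuotient_graph (F : ℝ × (Fin m → ℝ) → ℝ) (f : (Fin m → ℝ) → ℝ) (w : Fin m → ℝ) :
    taylorQuotient F f (f w, w) = pd1 (pd1 F) (f w, w) / 2 := by
  have h : ∫ t in (0 : ℝ)..1, (1 - t) = 1 / 2 := by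
    rw [intervalIntegral.integral_comp_sub_left (fun t => t)]
    norm_num
  simp [taylorQuotient, intervalIntegral.integral_mul_const, h, div_eq_inv_mul]

variable {F : ℝ × (Fin m → ℝ) → ℝ} {W : Set (ℝ × (Fin m → ℝ))} {f : (Fin m → ℝ) → ℝ}

theorem eq_add_sq_mul_taylorQuotient (hW : IsOpen W) (hF : ContDiffOn ℝ ∞ F W)
    {q : ℝ × (Fin m → ℝ)} (hq : ∀ t ∈ Icc (0 : ℝ) 1, (f q.2 + t * (q.1 - f q.2), q.2) ∈ W) :
    F q = F (f q.2, q.2) + pd1 F (f q.2, q.2) * (q.1 - f q.2)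
      + (q.1 - f q.2) ^ 2 * taylorQuotient F f q := by
  obtain ⟨x, w⟩ := q
  set c := f w
  set y := x - c
  have hline : ∀ {G : ℝ × (Fin m → ℝ) → ℝ}, ContDiffOn ℝ ∞ G W → ∀ t ∈ Icc (0 : ℝ) 1,
      HasDerivAt (fun s => G (c + s * y, w)) (pd1 G (c + t * y, w) * y) t := fun hG t ht => by
    have hG' := ((hG.differentiableOn (by simp)).differentiableAt
      (hW.mem_nhds (hq t ht))).hasDerivAt_pd1
    have h := hG'.comp t (((hasDerivAt_id' t).mul_const y).const_add c)
    rwa [one_mul] at h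
  have hF₁ := hF.pd1 hW
  have htaylor := integral_one_sub_mul_eq_of_hasDerivAt (hline hF)
    (fun t ht => (hline hF₁ t ht).mul_const y)
    (((hF₁.pd1 hW).continuousOn.comp (by fun_prop) hq).mul continuousOn_const |>.mul
      continuousOn_const)
  simp_rw [← mul_assoc, intervalIntegral.integral_mul_const] at htaylor
  simp only [one_mul, zero_mul, add_zero, c, y, add_sub_cancel] at htaylor
  rw [taylorQuotient]
  linear_combination -htaylor

theorem eq_sq_mul_taylorQuotient_add (hW : IsOpen W) (hF : ContDiffOn ℝ ∞ F W)
    {q : ℝ × (Fin m → ℝ)} (hq : ∀ t ∈ Icc (0 : ℝ) 1, (f q.2 + t * (q.1 - f q.2), q.2) ∈ W)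
    (hcrit : pd1 F (f q.2, q.2) = 0) :
    F q = (q.1 - f q.2) ^ 2 * taylorQuotient F f q + F (f q.2, q.2) := by
  rw [eq_add_sq_mul_taylorQuotient hW hF hq, hcrit]
  ring

theorem contDiffOn_taylorQuotient (hW : IsOpen W) (hF : ContDiffOn ℝ ∞ F W)
    {U : Set (Fin m → ℝ)} (hU : IsOpen U) (hf : ContDiffOn ℝ ∞ f U) {N : Set (ℝ × (Fin m → ℝ))}
    (hN : IsOpen N)
    (hNUW : ∀ q ∈ N, q.2 ∈ U ∧ ∀ t ∈ Icc (0 : ℝ) 1, (f q.2 + t * (q.1 - f q.2), q.2) ∈ W) :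
    ContDiffOn ℝ ∞ (taylorQuotient F f) N := by
  have hF₂ := (hF.pd1 hW).pd1 hW
  refine contDiffOn_infty.2 fun n => contDiffOn_intervalIntegral_of_contDiffAt hN n
    (K := fun p => (1 - p.1) * pd1 (pd1 F) (f p.2.2 + p.1 * (p.2.1 - f p.2.2), p.2.2))
    fun t ht q hq => ContDiffAt.of_le (n := ∞) ?_ (by exact_mod_cast le_top)
  rw [uIcc_of_le zero_le_one] at ht
  have hfq : ContDiffAt ℝ ∞ (fun p : ℝ × (ℝ × (Fin m → ℝ)) => f p.2.2) (t, q) :=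
    (hf.contDiffAt (hU.mem_nhds (hNUW q hq).1)).comp (t, q) contDiffAt_snd.snd
  have hσ : ContDiffAt ℝ ∞
      (fun p : ℝ × (ℝ × (Fin m → ℝ)) => (f p.2.2 + p.1 * (p.2.1 - f p.2.2), p.2.2)) (t, q) :=
    (hfq.add (contDiffAt_fst.mul (contDiffAt_snd.fst.sub hfq))).prodMk contDiffAt_snd.snd
  have hF₂σ := (hF₂.contDiffAt (hW.mem_nhds ((hNUW q hq).2 t ht))).comp (t, q) hσ
  exact (contDiffAt_const.sub contDiffAt_fst).mul hF₂σ

end Division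

theorem division_step_cuspidal_edge {m : ℕ} (g : ℝ × (Fin m → ℝ) → ℝ)
    (xb : ℝ) (wb : Fin m → ℝ)
    (W : Set (ℝ × (Fin m → ℝ))) (hWopen : IsOpen W) (hmem : (xb, wb) ∈ W)
    (hg : ContDiffOn ℝ (⊤ : ℕ∞) g W)
    (h2 : pd1 (pd1 g) (xb, wb) = 0)
    (h3 : pd1 (pd1 (pd1 g)) (xb, wb) ≠ 0) :
    ∃ (N : Set (ℝ × (Fin m → ℝ))) (U₂ : Set (Fin m → ℝ)) (f : (Fin m → ℝ) → ℝ)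
      (φ₁ φ₂ : ℝ × (Fin m → ℝ) → ℝ) (k₁ k₂ : (Fin m → ℝ) → ℝ),
      IsOpen N ∧ (xb, wb) ∈ N ∧ N ⊆ W ∧
      IsOpen U₂ ∧ wb ∈ U₂ ∧
      ContDiffOn ℝ (⊤ : ℕ∞) f U₂ ∧ f wb = xb ∧
      {q | q ∈ N ∧ pd1 (pd1 g) q = 0} = {q | ∃ w ∈ U₂, q = (f w, w)} ∩ N ∧
      ContDiffOn ℝ (⊤ : ℕ∞) φ₁ N ∧ ContDiffOn ℝ (⊤ : ℕ∞) φ₂ N ∧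
      ContDiffOn ℝ (⊤ : ℕ∞) k₁ U₂ ∧ ContDiffOn ℝ (⊤ : ℕ∞) k₂ U₂ ∧
      (∀ q ∈ N, Pfun g q = (q.1 - f q.2) ^ 2 * φ₁ q + k₁ q.2 ∧
        Zfun g q = (q.1 - f q.2) ^ 2 * φ₂ q + k₂ q.2) ∧
      φ₁ (xb, wb) ≠ 0 := by
  have hP : ContDiffOn ℝ ∞ (pd1 g) W := hg.pd1 hWopen
  have hh : ContDiffOn ℝ ∞ (pd1 (pd1 g)) W := hP.pd1 hWopen
  have hZ : ContDiffOn ℝ ∞ (Zfun g) W := (contDiffOn_fst.mul hP).sub hg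
  obtain ⟨f, U, S, hU, hwbU, hf, hfwb, hS, hSW, hgraph, hzero⟩ :=
    exists_contDiffOn_implicit hWopen hh hmem h2 (hh.pd1_eq_fderiv hWopen hmem ▸ h3)
  have hcritP : ∀ w ∈ U, pd1 (pd1 g) (f w, w) = 0 := fun w hw =>
    (hzero _ (hgraph w hw)).2 ⟨w, hw, rfl⟩
  have hcritZ : ∀ w ∈ U, pd1 (Zfun g) (f w, w) = 0 := fun w hw => by
    rw [pd1_Zfun hg hWopen (hSW (hgraph w hw)), hcritP w hw, mul_zero]
  obtain ⟨V, hVN, hV, hbV⟩ := eventually_nhds_iff.1 <| hfwb ▸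
    (continuousAt_snd.eventually_mem (hU.mem_nhds hwbU)).and
      (eventually_forall_segment_mem (hf.contDiffAt (hU.mem_nhds hwbU)).continuousAt hWopen
        (hfwb ▸ hmem))
  have hN : ∀ q ∈ V ∩ S, q.2 ∈ U ∧ ∀ t ∈ Icc (0 : ℝ) 1, (f q.2 + t * (q.1 - f q.2), q.2) ∈ W :=
    fun q hq => hVN q hq.1
  have hk : ∀ {G : ℝ × (Fin m → ℝ) → ℝ}, ContDiffOn ℝ ∞ G W →
      ContDiffOn ℝ ∞ (fun w => G (f w, w)) U := fun hG =>
    hG.comp (hf.prodMk contDiffOn_id) fun w hw => hSW (hgraph w hw)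
  refine ⟨V ∩ S, U, f, taylorQuotient (Pfun g) f, taylorQuotient (Zfun g) f,
    fun w => Pfun g (f w, w), fun w => Zfun g (f w, w), hV.inter hS,
    ⟨hbV, hfwb ▸ hgraph wb hwbU⟩, inter_subset_right.trans hSW, hU, hwbU, hf, hfwb, ?_,
    contDiffOn_taylorQuotient hWopen hP hU hf (hV.inter hS) hN,
    contDiffOn_taylorQuotient hWopen hZ hU hf (hV.inter hS) hN, hk hP, hk hZ,
    fun q hq => ⟨eq_sq_mul_taylorQuotient_add hWopen hP (hN q hq).2 (hcritP _ (hN q hq).1),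
      eq_sq_mul_taylorQuotient_add hWopen hZ (hN q hq).2 (hcritZ _ (hN q hq).1)⟩, ?_⟩
  · ext q
    exact ⟨fun ⟨hq, h0⟩ => ⟨(hzero q hq.2).1 h0, hq⟩,
      fun ⟨hgr, hq⟩ => ⟨hq, (hzero q hq.2).2 hgr⟩⟩
  · rw [← hfwb, taylorQuotient_graph]
    exact div_ne_zero (hfwb ▸ h3) two_ne_zero
end

section
/- For every vector v = (v₁,…,v_n) ∈ ℝ^n and every r ∈ ℝ^n, define h_v(r) = Σ_{i,k∈I} ∂_i∂_k g(r)·v_i v_k − Σ_{j,l∈J} ∂_j∂_l g(r)·v_j v_l and C_v(r) = Σ_{k,l,m=1}^n ∂_k∂_l∂_m g(r)·v_k v_l v_m. Then C_v(r) + (d/ds)|_{s=0} h_v(r + s·v) = −2·(∂/∂s)(∂/∂t)²|_{s=t=0} D(r + s·v, r + t·v). (This is Proposition 4.1, τ(Φ(X), ∇^{E′}_X Φ′(X)) = ¼(C(X,X,X) + X h(X,X)), combined with Corollary 4.3 identity τ(Φ(X), ∇^{E′}_X Φ′(X)) = −½ D[X|XX], expressed in affine flat coordinates for a constant vector field X =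 v.) -/
/-- Partial derivative in the k-th coordinate. -/
noncomputable def pder {n : ℕ} (k : Fin n) (g : (Fin n → ℝ) → ℝ) : (Fin n → ℝ) → ℝ :=
  fun a => deriv (fun t => g (Function.update a k t)) (a k)

/-- The canonical divergence `D(a,b)` associated to a generating function `g`
and a partition `I ⊔ J` of the index set. -/
noncomputable def canDiv {n : ℕ} (I J : Finset (Fin n)) (g : (Fin n → ℝ) → ℝ)
    (a b : Fin n → ℝ) : ℝ :=
  g a - g b - ∑ j ∈ J, pder j g a * (a j - b j) + ∑ i ∈ I, pder i g b * (b i - a i)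

/-!
Along the line `γ s = r + s • v` the divergence reads
`D(γ s, γ t) = φ s - φ t - (s - t) q(s) + (t - s) p(t)` with `φ = g ∘ γ` and
`p(t) = ∑_{i ∈ I} ∂_i g(γ t) v_i`, so `∂_s ∂_t² D` at the origin is `-p''(0)`, i.e. minus the
symmetric third-derivative tensor `T(a, b) = ∑_c ∂_a ∂_b ∂_c g(r) v_a v_b v_c` summed over
`a ∈ I`, `b` arbitrary. On the other side `C(v,v,v) + v h(v,v) = T(U,U) + T(I,I) - T(J,J)`, and
splitting `U = I ⊔ J` in the first index together with `T(J,I) = T(I,J)` turns this into `2 T(I,U)`.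
-/

open Finset

section PartialDerivatives

variable {n : ℕ} {f : (Fin n → ℝ) → ℝ}

theorem pder_eq_fderiv {a : Fin n → ℝ} (hf : DifferentiableAt ℝ f a) (k : Fin n) :
    pder k f a = fderiv ℝ f a (Pi.single k 1) := by
  rw [← Function.update_eq_self k a] at hf
  have h := hf.hasFDerivAt.comp_hasDerivAt (a k) (hasDerivAt_update a k (a k))
  rw [Function.update_eq_self] at h
  exact h.deriv

theorem pder_eq_fderiv_fun (hf : Differentiable ℝ f) (k : Fin n) :
    pder k f = fun a => fderiv ℝ f a (Pi.single k 1) :=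
  funext fun a => pder_eq_fderiv (hf a) k

theorem ContDiff.pder {m N : WithTop ℕ∞} (hf : ContDiff ℝ N f) (hmN : m + 1 ≤ N) (k : Fin n) :
    ContDiff ℝ m (pder k f) := by
  rw [pder_eq_fderiv_fun (hf.differentiable (by rintro rfl; simp at hmN)) k]
  exact (hf.fderiv_right hmN).clm_apply contDiff_const

theorem fderiv_apply_eq_sum_pder {x : Fin n → ℝ} (hf : DifferentiableAt ℝ f x) (v : Fin n → ℝ) :
    fderiv ℝ f x v = ∑ k, pder k f x * v k := by
  conv_lhs => rw [pi_eq_sum_univ' v, map_sum]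
  simp [pder_eq_fderiv hf, mul_comm]

theorem hasDerivAt_comp_line {r v : Fin n → ℝ} {s : ℝ} (hf : DifferentiableAt ℝ f (r + s • v)) :
    HasDerivAt (fun s : ℝ => f (r + s • v)) (∑ k, pder k f (r + s • v) * v k) s := by
  have hline : HasDerivAt (fun s : ℝ => r + s • v) v s := by
    simpa using ((hasDerivAt_id s).smul_const v).const_add r
  rw [← fderiv_apply_eq_sum_pder hf]
  exact hf.hasFDerivAt.comp_hasDerivAt s hline

theorem pder_comm (hf : ContDiff ℝ 2 f) (k l : Fin n) :
    pder k (pder l f) = pder l (pder k f) := by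
  have hf1 : Differentiable ℝ f := hf.differentiable (by simp)
  have hf' : Differentiable ℝ (fderiv ℝ f) :=
    (hf.fderiv_right (m := 1) le_rfl).differentiable one_ne_zero
  have key : ∀ k l : Fin n, pder k (pder l f) =
      fun a => fderiv ℝ (fderiv ℝ f) a (Pi.single k 1) (Pi.single l 1) := by
    intro k l
    rw [pder_eq_fderiv_fun hf1 l]
    funext a
    rw [pder_eq_fderiv ((hf' a).clm_apply (differentiableAt_const _)) k,
      fderiv_clm_apply (hf' a) (differentiableAt_const _)]
    simp
  rw [key, key]
  funext a
  exact (hf.contDiffAt.isSymmSndFDerivAt (by simp)) _ _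

theorem pder_pder_pder_rotate (hf : ContDiff ℝ 3 f) (a b c : Fin n) :
    pder a (pder b (pder c f)) = pder b (pder c (pder a f)) := by
  rw [pder_comm (hf.pder le_rfl c) a b, pder_comm (hf.of_le (by norm_num)) a c]

end PartialDerivatives

theorem canDiv_line {n : ℕ} (I J : Finset (Fin n)) (g : (Fin n → ℝ) → ℝ) (r v : Fin n → ℝ)
    (s t : ℝ) :
    canDiv I J g (r + s • v) (r + t • v) =
      g (r + s • v) - g (r + t • v) - (s - t) * ∑ j ∈ J, pder j g (r + s • v) * v j
        + (t - s) * ∑ i ∈ I, pder i g (r + t • v) * v i := by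
  have sum_line : ∀ (K : Finset (Fin n)) (x : Fin n → ℝ) (a b : ℝ),
      ∑ k ∈ K, pder k g x * ((r + a • v) k - (r + b • v) k)
        = (a - b) * ∑ k ∈ K, pder k g x * v k :=
    fun K x a b => by
      rw [mul_sum]; refine sum_congr rfl fun k _ => ?_
      simp only [Pi.add_apply, Pi.smul_apply, smul_eq_mul]; ring
  rw [canDiv, sum_line, sum_line]

theorem deriv_deriv_deriv_sub_sub_mul_add_mul {φ p : ℝ → ℝ} (q : ℝ → ℝ)
    (hφ : ContDiff ℝ 2 φ) (hp : ContDiff ℝ 2 p) (s₀ t₀ : ℝ) :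
    deriv (fun s => deriv (deriv (fun t => φ s - φ t - (s - t) * q s + (t - s) * p t)) t₀) s₀
      = -deriv (deriv p) t₀ := by
  have hφ1 : Differentiable ℝ φ := hφ.differentiable two_ne_zero
  have hp1 : Differentiable ℝ p := hp.differentiable two_ne_zero
  have hφ2 : Differentiable ℝ (deriv φ) := hφ.differentiable_deriv_two
  have hp2 : Differentiable ℝ (deriv p) := hp.differentiable_deriv_two
  have deriv_t : ∀ s, deriv (fun t => φ s - φ t - (s - t) * q s + (t - s) * p t)
      = fun t => q s - deriv φ t + (p t + (t - s) * deriv p t) := by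
    intro s; funext t
    have h := (((hasDerivAt_const t (φ s)).fun_sub (hφ1 t).hasDerivAt).fun_sub
      (((hasDerivAt_id' t).const_sub s).mul_const (q s))).fun_add
      (((hasDerivAt_id' t).sub_const s).fun_mul (hp1 t).hasDerivAt)
    rw [h.deriv]; ring
  have deriv_deriv_t : ∀ s, deriv (deriv (fun t => φ s - φ t - (s - t) * q s + (t - s) * p t)) t₀
      = 2 * deriv p t₀ - deriv (deriv φ) t₀ + (t₀ - s) * deriv (deriv p) t₀ := by
    intro s
    rw [deriv_t s]
    have h := ((hasDerivAt_const t₀ (q s)).fun_sub (hφ2 t₀).hasDerivAt).fun_add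
      ((hp1 t₀).hasDerivAt.fun_add
        (((hasDerivAt_id' t₀).sub_const s).fun_mul (hp2 t₀).hasDerivAt))
    rw [h.deriv]; ring
  simp_rw [deriv_deriv_t]
  have h := (hasDerivAt_const s₀ (2 * deriv p t₀ - deriv (deriv φ) t₀)).fun_add
    (((hasDerivAt_id' s₀).const_sub t₀).mul_const (deriv (deriv p) t₀))
  rw [h.deriv]; ring

theorem sum_sum_add_sum_sum_sub_sum_sum_eq_two_nsmul {ι M : Type*} [Fintype ι] [DecidableEq ι]
    [AddCommGroup M] {I J : Finset ι} (hdisj : Disjoint I J) (hunion : I ∪ J = univ) (A : ι → ι → M)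
    (hA : ∀ a b, A a b = A b a) :
    ∑ a, ∑ b, A a b + (∑ a ∈ I, ∑ b ∈ I, A a b - ∑ a ∈ J, ∑ b ∈ J, A a b)
      = 2 • ∑ a ∈ I, ∑ b, A a b := by
  have split : ∀ F : ι → M, ∑ a, F a = ∑ a ∈ I, F a + ∑ a ∈ J, F a := fun F => by
    rw [← sum_union hdisj, hunion]
  have swap : ∑ a ∈ J, ∑ b ∈ I, A a b = ∑ a ∈ I, ∑ b ∈ J, A a b := by
    rw [sum_comm]; simp only [hA]
  have split_rows : ∀ K : Finset ι,
      ∑ a ∈ K, ∑ b, A a b = ∑ a ∈ K, ∑ b ∈ I, A a b + ∑ a ∈ K, ∑ b ∈ J, A a b := fun K => by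
    rw [← sum_add_distrib]; exact sum_congr rfl fun a _ => split (A a)
  rw [split, split_rows J, swap, split_rows I, two_nsmul]
  abel

section AlongLine

variable {n : ℕ} {g : (Fin n → ℝ) → ℝ} (r v : Fin n → ℝ)

theorem hasDerivAt_hessian_quadratic_line (hg : ContDiff ℝ 3 g) (K : Finset (Fin n)) (s : ℝ) :
    HasDerivAt (fun s : ℝ => ∑ i ∈ K, ∑ k ∈ K, pder i (pder k g) (r + s • v) * v i * v k)
      (∑ i ∈ K, ∑ k ∈ K, ∑ p, pder i (pder k (pder p g)) (r + s • v) * v i * v k * v p) s := by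
  have hg2 : ∀ i k, Differentiable ℝ (pder i (pder k g)) := fun i k =>
    ((hg.pder (m := 2) le_rfl k).pder (m := 1) le_rfl i).differentiable one_ne_zero
  refine (HasDerivAt.fun_sum fun i (_ : i ∈ K) => HasDerivAt.fun_sum fun k (_ : k ∈ K) =>
    ((hasDerivAt_comp_line (hg2 i k (r + s • v))).mul_const (v i)).mul_const (v k)).congr_deriv ?_
  refine sum_congr rfl fun i _ => sum_congr rfl fun k _ => ?_
  rw [sum_mul, sum_mul]
  refine sum_congr rfl fun p _ => ?_
  rw [pder_pder_pder_rotate hg]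
  ring

theorem deriv_deriv_deriv_canDiv_line (hg : ContDiff ℝ 3 g) (I J : Finset (Fin n)) :
    deriv (fun s : ℝ => deriv (deriv (fun t : ℝ => canDiv I J g (r + s • v) (r + t • v))) 0) 0
      = -∑ i ∈ I, ∑ l, ∑ p, pder i (pder l (pder p g)) r * v i * v l * v p := by
  have hline : ContDiff ℝ 2 (fun t : ℝ => r + t • v) := by fun_prop
  have hg1 : ∀ i, ContDiff ℝ 2 (pder i g) := fun i => hg.pder le_rfl i
  have hg2 : ∀ i l, Differentiable ℝ (pder l (pder i g)) := fun i l =>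
    ((hg1 i).pder (m := 1) le_rfl l).differentiable one_ne_zero
  set p : ℝ → ℝ := fun t => ∑ i ∈ I, pder i g (r + t • v) * v i
  have hp : ContDiff ℝ 2 p := ContDiff.sum fun i _ => ((hg1 i).comp hline).mul contDiff_const
  have hp' : deriv p = fun t => ∑ i ∈ I, (∑ l, pder l (pder i g) (r + t • v) * v l) * v i :=
    funext fun t => (HasDerivAt.fun_sum fun i (_ : i ∈ I) =>
      (hasDerivAt_comp_line (((hg1 i).differentiable two_ne_zero) (r + t • v))).mul_const
        (v i)).deriv
  have hp'' := HasDerivAt.fun_sum fun i (_ : i ∈ I) => (HasDerivAt.fun_sum fun l (_ : l ∈ univ) =>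
    (hasDerivAt_comp_line (hg2 i l (r + (0 : ℝ) • v))).mul_const (v l)).mul_const (v i)
  simp_rw [canDiv_line]
  refine (deriv_deriv_deriv_sub_sub_mul_add_mul (φ := fun s => g (r + s • v)) (p := p) _
    ((hg.of_le (by norm_num)).comp hline) hp 0 0).trans ?_
  rw [hp', hp''.deriv, zero_smul, add_zero]
  congr 1
  refine sum_congr rfl fun i _ => ?_
  rw [sum_mul]
  refine sum_congr rfl fun l _ => ?_
  rw [sum_mul, sum_mul]
  refine sum_congr rfl fun q _ => ?_
  rw [pder_pder_pder_rotate hg, pder_comm (hg.pder le_rfl q) l i]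
  ring

end AlongLine

theorem cubic_tensor_plus_deriv_metric_eq_divergence {n : ℕ} (I J : Finset (Fin n))
    (hdisj : Disjoint I J) (hunion : I ∪ J = Finset.univ)
    (g : (Fin n → ℝ) → ℝ) (hg : ContDiff ℝ (⊤ : ℕ∞) g)
    (v r : Fin n → ℝ) :
    (∑ k : Fin n, ∑ l : Fin n, ∑ p : Fin n,
        pder k (pder l (pder p g)) r * v k * v l * v p)
      + deriv (fun s : ℝ =>
          (∑ i ∈ I, ∑ k ∈ I, pder i (pder k g) (r + s • v) * v i * v k)
            - ∑ j ∈ J, ∑ l ∈ J, pder j (pder l g) (r + s • v) * v j * v l) 0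
    = -2 * deriv (fun s : ℝ =>
        deriv (deriv (fun t : ℝ => canDiv I J g (r + s • v) (r + t • v))) 0) 0 := by
  have hg3 : ContDiff ℝ 3 g := hg.of_le (by norm_cast)
  rw [((hasDerivAt_hessian_quadratic_line r v hg3 I 0).fun_sub
      (hasDerivAt_hessian_quadratic_line r v hg3 J 0)).deriv,
    deriv_deriv_deriv_canDiv_line r v hg3, zero_smul, add_zero]
  have key := sum_sum_add_sum_sum_sub_sum_sum_eq_two_nsmul hdisj hunion
    (fun k l => ∑ p, pder k (pder l (pder p g)) r * v k * v l * v p) fun k l =>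
      sum_congr rfl fun p _ => by rw [pder_comm (hg3.pder le_rfl p) k l]; ring
  rw [two_nsmul] at key
  linarith
end

section
/- For all indices t, u, v ∈ {1,…,n} and all r ∈ ℝ^n: if u ∈ I then D[u | t v](r) = −∂_t∂_u∂_v g(r), and if u ∈ J then D[u | t v](r) = 0. (This is the coordinate content of equation (dm1) in Theorem 4.2: τ(Φ(Z), ∇^{E′}_Y Φ′(W)) = −½ D_M[Z | Y W].) -/
/-- Partial derivative in the u-th coordinate of the first argument. -/
noncomputable def dFst {n : ℕ} (u : Fin n) (F : (Fin n → ℝ) → (Fin n → ℝ) → ℝ) :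
    (Fin n → ℝ) → (Fin n → ℝ) → ℝ :=
  fun a b => deriv (fun t => F (Function.update a u t) b) (a u)

/-- Partial derivative in the u-th coordinate of the second argument. -/
noncomputable def dSnd {n : ℕ} (u : Fin n) (F : (Fin n → ℝ) → (Fin n → ℝ) → ℝ) :
    (Fin n → ℝ) → (Fin n → ℝ) → ℝ :=
  fun a b => deriv (fun t => F a (Function.update b u t)) (b u)

section PartialDeriv

variable {n : ℕ} {f : (Fin n → ℝ) → ℝ}

noncomputable def partialDeriv (k : Fin n) (f : (Fin n → ℝ) → ℝ) : (Fin n → ℝ) → ℝ :=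
  fun a => fderiv ℝ f a (Pi.single k 1)

theorem hasDerivAt_comp_update {b : Fin n → ℝ} (k : Fin n) (hf : DifferentiableAt ℝ f b) :
    HasDerivAt (fun s => f (Function.update b k s)) (partialDeriv k f b) (b k) :=
  hf.hasFDerivAt.comp_hasDerivAt_of_eq (b k) (hasDerivAt_update b k (b k)) (by simp)

theorem hasDerivAt_update_apply (b : Fin n → ℝ) (k i : Fin n) :
    HasDerivAt (fun s => Function.update b k s i) (if i = k then 1 else 0) (b k) := by
  simpa [Pi.single_apply] using hasDerivAt_pi.1 (hasDerivAt_update b k (b k)) i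

theorem pder_eq_partialDeriv (hf : Differentiable ℝ f) (k : Fin n) :
    pder k f = partialDeriv k f :=
  funext fun a => (hasDerivAt_comp_update k (hf a)).deriv

theorem ContDiff.partialDeriv {m m' : WithTop ℕ∞} (hf : ContDiff ℝ m f) (hm : m' + 1 ≤ m)
    (k : Fin n) : ContDiff ℝ m' (partialDeriv k f) :=
  (hf.fderiv_right hm).clm_apply contDiff_const

theorem partialDeriv_comm (hf : ContDiff ℝ 2 f) (k l : Fin n) :
    partialDeriv k (partialDeriv l f) = partialDeriv l (partialDeriv k f) := by
  have hf' : Differentiable ℝ (fderiv ℝ f) := (hf.fderiv_right le_rfl).differentiable one_ne_zero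
  have fderiv_partialDeriv : ∀ i j x, partialDeriv i (partialDeriv j f) x
      = fderiv ℝ (fderiv ℝ f) x (Pi.single i 1) (Pi.single j 1) := fun i j x =>
    congrArg (· (Pi.single i 1)) (fderiv_clm_apply (hf' x) (differentiableAt_const _)) |>.trans
      (by simp)
  funext x
  rw [fderiv_partialDeriv, fderiv_partialDeriv, (hf.contDiffAt.isSymmSndFDerivAt (by simp)).eq]

theorem hasDerivAt_comp_update_mul_sub {b : Fin n → ℝ} (k i : Fin n) (c : ℝ)
    (hf : DifferentiableAt ℝ f b) :
    HasDerivAt (fun s => f (Function.update b k s) * (Function.update b k s i - c))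
      (partialDeriv k f b * (b i - c) + if i = k then f b else 0) (b k) := by
  refine ((hasDerivAt_comp_update k hf).mul
    ((hasDerivAt_update_apply b k i).sub_const c)).congr_deriv ?_
  simp only [Function.update_eq_self, mul_ite, mul_one, mul_zero]

end PartialDeriv

section CanonicalDivergence

variable {n : ℕ} {I J : Finset (Fin n)} {g : (Fin n → ℝ) → ℝ}

theorem dSnd_eq_of_hasDerivAt {F F' : (Fin n → ℝ) → (Fin n → ℝ) → ℝ} {k : Fin n}
    (h : ∀ a b, HasDerivAt (fun s => F a (Function.update b k s)) (F' a b) (b k)) :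
    dSnd k F = F' :=
  funext₂ fun a b => (h a b).deriv

theorem dFst_eq_of_hasDerivAt {F F' : (Fin n → ℝ) → (Fin n → ℝ) → ℝ} {k : Fin n}
    (h : ∀ a b, HasDerivAt (fun s => F (Function.update a k s) b) (F' a b) (a k)) :
    dFst k F = F' :=
  funext₂ fun a b => (h a b).deriv

theorem dSnd_canDiv (hg : ContDiff ℝ 2 g) (v : Fin n) :
    dSnd v (canDiv I J g) = fun a b =>
      -partialDeriv v g b + (if v ∈ J then partialDeriv v g a else 0)
        + ∑ i ∈ I, partialDeriv v (partialDeriv i g) b * (b i - a i)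
        + (if v ∈ I then partialDeriv v g b else 0) := by
  have hg₁ : Differentiable ℝ g := hg.differentiable (by norm_num)
  have hg₂ (i : Fin n) : Differentiable ℝ (partialDeriv i g) :=
    (hg.partialDeriv (m' := 1) (by norm_num) i).differentiable one_ne_zero
  refine dSnd_eq_of_hasDerivAt fun a b => ?_
  simp only [canDiv, pder_eq_partialDeriv hg₁]
  refine ((((hasDerivAt_const (b v) (g a)).sub (hasDerivAt_comp_update v (hg₁ b))).sub
    (HasDerivAt.fun_sum fun j _ =>
      ((hasDerivAt_update_apply b v j).const_sub (a j)).const_mul (partialDeriv j g a))).add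
    (HasDerivAt.fun_sum fun i _ =>
      hasDerivAt_comp_update_mul_sub v i (a i) (hg₂ i b))).congr_deriv ?_
  simp only [Finset.sum_add_distrib, Finset.sum_ite_eq', mul_neg, mul_ite, mul_one, mul_zero,
    Finset.sum_neg_distrib]
  ring

theorem dSnd_dSnd_canDiv (hg : ContDiff ℝ 3 g) (t v : Fin n) :
    dSnd t (dSnd v (canDiv I J g)) = fun a b =>
      -partialDeriv t (partialDeriv v g) b
        + ∑ i ∈ I, partialDeriv t (partialDeriv v (partialDeriv i g)) b * (b i - a i)
        + (if t ∈ I then partialDeriv v (partialDeriv t g) b else 0)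
        + (if v ∈ I then partialDeriv t (partialDeriv v g) b else 0) := by
  have hg₂ (i : Fin n) : Differentiable ℝ (partialDeriv i g) :=
    (hg.partialDeriv (m' := 2) (by norm_num) i).differentiable two_ne_zero
  have hg₃ (i j : Fin n) : Differentiable ℝ (partialDeriv j (partialDeriv i g)) :=
    ((hg.partialDeriv (m' := 2) (by norm_num) i).partialDeriv (m' := 1) (by norm_num)
      j).differentiable one_ne_zero
  rw [dSnd_canDiv (hg.of_le (by norm_num))]
  refine dSnd_eq_of_hasDerivAt fun a b => ?_
  have hI : HasDerivAt (fun s => if v ∈ I then partialDeriv v g (Function.update b t s) else 0)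
      (if v ∈ I then partialDeriv t (partialDeriv v g) b else 0) (b t) := by
    by_cases hv : v ∈ I
    · simpa only [hv, if_true] using hasDerivAt_comp_update t (hg₂ v b)
    · simpa only [hv, if_false] using hasDerivAt_const (b t) (0 : ℝ)
  refine ((((hasDerivAt_comp_update t (hg₂ v b)).neg.add (hasDerivAt_const _ _)).add
    (HasDerivAt.fun_sum fun i _ => hasDerivAt_comp_update_mul_sub t i (a i) (hg₃ i v b))).add
      hI).congr_deriv ?_
  simp only [Finset.sum_add_distrib, Finset.sum_ite_eq']
  ring

theorem dFst_dSnd_dSnd_canDiv (hg : ContDiff ℝ 3 g) (t u v : Fin n) :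
    dFst u (dSnd t (dSnd v (canDiv I J g))) = fun _ b =>
      -(if u ∈ I then partialDeriv t (partialDeriv v (partialDeriv u g)) b else 0) := by
  rw [dSnd_dSnd_canDiv hg]
  refine dFst_eq_of_hasDerivAt fun a b => ?_
  refine ((((hasDerivAt_const _ _).add (HasDerivAt.fun_sum fun i _ =>
    ((hasDerivAt_update_apply a u i).const_sub (b i)).const_mul _)).add
      (hasDerivAt_const _ _)).add (hasDerivAt_const _ _)).congr_deriv ?_
  simp only [mul_neg, mul_ite, mul_one, mul_zero, Finset.sum_neg_distrib, Finset.sum_ite_eq']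
  ring

end CanonicalDivergence

theorem divergence_third_derivative_general {n : ℕ} (I J : Finset (Fin n))
    (hdisj : Disjoint I J)
    (g : (Fin n → ℝ) → ℝ) (hg : ContDiff ℝ (⊤ : ℕ∞) g)
    (t u v : Fin n) (r : Fin n → ℝ) :
    (u ∈ I → dFst u (dSnd t (dSnd v (canDiv I J g))) r r
        = -(pder t (pder u (pder v g)) r)) ∧
    (u ∈ J → dFst u (dSnd t (dSnd v (canDiv I J g))) r r = 0) := by
  have hsmooth (i : Fin n) {f : (Fin n → ℝ) → ℝ} (hf : ContDiff ℝ (⊤ : ℕ∞) f) :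
      ContDiff ℝ (⊤ : ℕ∞) (partialDeriv i f) :=
    hf.partialDeriv (by simp) i
  have hdiff {f : (Fin n → ℝ) → ℝ} (hf : ContDiff ℝ (⊤ : ℕ∞) f) : Differentiable ℝ f :=
    hf.differentiable (by simp)
  simp only [dFst_dSnd_dSnd_canDiv (hg.of_le (by norm_cast))]
  refine ⟨fun hu => ?_, fun hu => ?_⟩
  · rw [pder_eq_partialDeriv (hdiff hg), pder_eq_partialDeriv (hdiff (hsmooth v hg)),
      pder_eq_partialDeriv (hdiff (hsmooth u (hsmooth v hg))),
      partialDeriv_comm (hg.of_le (by norm_cast)) u v, if_pos hu]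
  · rw [if_neg (Finset.disjoint_right.1 hdisj hu), neg_zero]

theorem divergence_third_derivative {n : ℕ} (I J : Finset (Fin n))
    (hdisj : Disjoint I J) (hunion : I ∪ J = Finset.univ)
    (g : (Fin n → ℝ) → ℝ) (hg : ContDiff ℝ (⊤ : ℕ∞) g)
    (t u v : Fin n) (r : Fin n → ℝ) :
    (u ∈ I → dFst u (dSnd t (dSnd v (canDiv I J g))) r r
        = -(pder t (pder u (pder v g)) r)) ∧
    (u ∈ J → dFst u (dSnd t (dSnd v (canDiv I J g))) r r = 0) :=
  divergence_third_derivative_general I J hdisj g hg t u v r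
end

section
/- (Malgrange's division theorem.) Let f(t, x) be a real-valued C^∞ function defined on an open neighborhood of the origin of ℝ^{n+1}, where t ∈ ℝ and x ∈ ℝ^n, and let P(t) = Σ_{i=0}^d λ_i t^i be a real polynomial of degree d (λ_d ≠ 0). Then there exist a C^∞ function Q(t, x) on an open neighborhood of the origin of ℝ^{n+1} and C^∞ functions r_i(x) (0 ≤ i ≤ d−1) on an open neighborhood of the origin of ℝ^n such that f(t, x) = Q(t, x)·P(t) + Σ_{i=0}^{d−1} r_i(x)·t^i on a neighborhood of the origin. -/
/-!
Near `t = 0` the polynomial factors as `P(t) = t ^ k * u(t)` with `k ≤ d` and `u(0) ≠ 0`.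
Iterating Hadamard's lemma `f(t, x) = f(0, x) + t * g(t, x)`, where
`g(t, x) = ∫₀¹ ∂ₜf(s t, x) ds` is smooth by differentiation under the integral sign, gives
`f = ∑_{i<d} cᵢ(x) tⁱ + t ^ d * R(t, x)`, and `t ^ d * R = P * (t ^ (d - k) * R / u)` wherever
`u(t) ≠ 0`. To integrate along segments, `f` is first made globally smooth with a bump function.
-/

open MeasureTheory Metric Set Filter Topology Polynomial
open scoped ContDiff

universe u

theorem Polynomial.exists_eq_X_pow_natTrailingDegree_mul {R : Type*} [Semiring R] (p : R[X])
    (hp : p ≠ 0) : ∃ q : R[X], p = X ^ p.natTrailingDegree * q ∧ q.coeff 0 ≠ 0 := by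
  set k := p.natTrailingDegree
  obtain ⟨q, hpq⟩ := X_pow_dvd_iff.mpr fun _ (h : _ < k) => coeff_eq_zero_of_lt_natTrailingDegree h
  refine ⟨q, hpq, ?_⟩
  have : p.coeff k ≠ 0 := trailingCoeff_nonzero_iff_nonzero.mpr hp
  rwa [hpq, coeff_X_pow_mul', if_pos le_rfl, Nat.sub_self] at this

theorem exists_sum_range_eq_pow_mul {R : Type*} [CommSemiring R] {d : ℕ} {lam : ℕ → R}
    (hlam : lam d ≠ 0) : ∃ k ≤ d, ∃ q : R[X], q.eval 0 ≠ 0 ∧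
      ∀ t, ∑ i ∈ Finset.range (d + 1), lam i * t ^ i = t ^ k * q.eval t := by
  set p : R[X] := ∑ i ∈ Finset.range (d + 1), C (lam i) * X ^ i
  have hpd : p.coeff d = lam d := by simp [p]
  obtain ⟨q, hpq, hq⟩ :=
    p.exists_eq_X_pow_natTrailingDegree_mul fun h => hlam (by simp [← hpd, h])
  refine ⟨_, natTrailingDegree_le_of_ne_zero (hpd ▸ hlam), q,
    by rwa [← coeff_zero_eq_eval_zero], fun t => ?_⟩
  simpa [p, eval_finsetSum] using congrArg (eval t) hpq

section Extension

variable {E F : Type*} [NormedAddCommGroup E] [NormedSpace ℝ E] [HasContDiffBump E]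
  [NormedAddCommGroup F] [NormedSpace ℝ F]

theorem ContDiffOn.exists_contDiff_eqOn_ball {n : ℕ∞} {f : E → F} {W : Set E} {x : E}
    (hf : ContDiffOn ℝ n f W) (hW : IsOpen W) (hx : x ∈ W) :
    ∃ ε > 0, ball x ε ⊆ W ∧ ∃ g : E → F, ContDiff ℝ n g ∧ EqOn g f (ball x ε) := by
  obtain ⟨ε, hε, hεW⟩ := Metric.isOpen_iff.mp hW x hx
  let χ : ContDiffBump x := ⟨ε / 4, ε / 2, by positivity, by linarith⟩
  have hχW : tsupport χ ⊆ W := by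
    rw [χ.tsupport_eq]
    exact (closedBall_subset_ball (show ε / 2 < ε by linarith)).trans hεW
  refine ⟨ε / 4, by positivity, (ball_subset_ball (by linarith)).trans hεW,
    fun y => χ y • f y, contDiff_iff_contDiffAt.mpr fun y => ?_,
    fun y hy => by simp [χ.one_of_mem_closedBall (ball_subset_closedBall hy)]⟩
  by_cases hy : y ∈ W
  · exact χ.contDiffAt.smul (hf.contDiffAt (hW.mem_nhds hy))
  · have hy' : y ∉ tsupport fun y => χ y • f y :=
      fun h => hy (hχW (tsupport_smul_subset_left _ _ h))
    exact contDiffAt_const.congr_of_eventuallyEq (notMem_tsupport_iff_eventuallyEq.mp hy')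

end Extension

section ParametricIntegral

variable {E F : Type*} [NormedAddCommGroup E] [NormedSpace ℝ E] [FiniteDimensional ℝ E]
  [NormedAddCommGroup F] [NormedSpace ℝ F]

theorem hasFDerivAt_intervalIntegral_param {k : ℝ × E → F} (hk : ContDiff ℝ 1 k) (a b : ℝ)
    (x : E) : HasFDerivAt (fun y => ∫ s in a..b, k (s, y))
      (∫ s in a..b, fderiv ℝ k (s, x) ∘L ContinuousLinearMap.inr ℝ ℝ E) x := by
  have hk' : Continuous fun q => fderiv ℝ k q ∘L ContinuousLinearMap.inr ℝ ℝ E :=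
    (hk.continuous_fderiv one_ne_zero).clm_comp continuous_const
  obtain ⟨C, hC⟩ := (isCompact_uIcc.prod (isCompact_closedBall x 1)).exists_bound_of_continuousOn
    hk'.continuousOn
  refine intervalIntegral.hasFDerivAt_integral_of_dominated_of_fderiv_le
    (ball_mem_nhds x one_pos) (bound := fun _ => C)
    (F' := fun y s => fderiv ℝ k (s, y) ∘L ContinuousLinearMap.inr ℝ ℝ E) ?_ ?_ ?_ ?_
    intervalIntegrable_const ?_
  · exact .of_forall fun y => (hk.continuous.comp (.prodMk_left y)).aestronglyMeasurable
  · exact (hk.continuous.comp (.prodMk_left x)).intervalIntegrable a b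
  · exact (hk'.comp (.prodMk_left x)).aestronglyMeasurable
  · exact .of_forall fun s hs y hy => hC (s, y) ⟨uIoc_subset_uIcc hs, ball_subset_closedBall hy⟩
  · exact .of_forall fun s _ y _ =>
      ((hk.differentiable one_ne_zero _).hasFDerivAt).comp y (hasFDerivAt_prodMk_right s y)

end ParametricIntegral

/- `E` and `F` share a universe because the induction passes from `F` to `E →L[ℝ] F`. -/
theorem contDiff_intervalIntegral_param {E F : Type u} [NormedAddCommGroup E] [NormedSpace ℝ E]
    [FiniteDimensional ℝ E] [NormedAddCommGroup F] [NormedSpace ℝ F] (a b : ℝ)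
    {m : ℕ} {k : ℝ × E → F} (hk : ContDiff ℝ m k) :
    ContDiff ℝ m fun y => ∫ s in a..b, k (s, y) := by
  induction m generalizing F with
  | zero =>
    exact contDiff_zero.mpr <|
      intervalIntegral.continuous_parametric_intervalIntegral_of_continuous'
        (f := fun y s => k (s, y)) (hk.continuous.comp continuous_swap) a b
  | succ m ih =>
    have hderiv := hasFDerivAt_intervalIntegral_param (hk.of_le (by simp)) a b
    rw [Nat.cast_succ, contDiff_succ_iff_fderiv]
    refine ⟨fun x => (hderiv x).differentiableAt, by simp, ?_⟩
    rw [funext fun x => (hderiv x).fderiv]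
    exact ih ((hk.fderiv_right le_rfl).clm_comp contDiff_const)

section Hadamard

variable {E F : Type u} [NormedAddCommGroup E] [NormedSpace ℝ E] [FiniteDimensional ℝ E]
  [NormedAddCommGroup F] [NormedSpace ℝ F] [CompleteSpace F]

theorem ContDiff.exists_eq_add_fst_smul {f : ℝ × E → F} (hf : ContDiff ℝ ∞ f) :
    ∃ g : ℝ × E → F, ContDiff ℝ ∞ g ∧ ∀ p, f p = f (0, p.2) + p.1 • g p := by
  set k : ℝ × (ℝ × E) → F := fun q => fderiv ℝ f (q.1 * q.2.1, q.2.2) (1, 0)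
  have hk : ContDiff ℝ ∞ k := ((hf.fderiv_right (by simp)).clm_apply contDiff_const).comp
    ((contDiff_fst.mul (contDiff_fst.comp contDiff_snd)).prodMk (contDiff_snd.comp contDiff_snd))
  refine ⟨fun p => ∫ s in (0 : ℝ)..1, k (s, p),
    contDiff_infty.mpr fun m => contDiff_intervalIntegral_param 0 1 (contDiff_infty.mp hk m),
    fun ⟨t, x⟩ => ?_⟩
  have hderiv : ∀ s ∈ uIcc (0 : ℝ) 1,
      HasDerivAt (fun s : ℝ => f (s * t, x)) (t • k (s, (t, x))) s := by
    intro s _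
    have hline : HasDerivAt (fun s : ℝ => (s * t, x)) (t • ((1 : ℝ), (0 : E))) s := by
      simpa using (hasDerivAt_mul_const t).prodMk (hasDerivAt_const s x)
    have := ((hf.differentiable (by simp) _).hasFDerivAt).comp_hasDerivAt s hline
    rwa [map_smul] at this
  have hftc := intervalIntegral.integral_eq_sub_of_hasDerivAt hderiv
    ((continuous_const.smul (hk.continuous.comp (.prodMk_left _))).intervalIntegrable 0 1)
  rw [intervalIntegral.integral_smul] at hftc
  simp only [one_mul, zero_mul] at hftc
  rw [hftc, add_sub_cancel]

theorem ContDiff.exists_eq_sum_fst_pow_smul_add (k : ℕ) {f : ℝ × E → F} (hf : ContDiff ℝ ∞ f) :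
    ∃ (c : ℕ → E → F) (R : ℝ × E → F), (∀ i, ContDiff ℝ ∞ (c i)) ∧ ContDiff ℝ ∞ R ∧
      ∀ p, f p = ∑ i ∈ Finset.range k, p.1 ^ i • c i p.2 + p.1 ^ k • R p := by
  induction k with
  | zero => exact ⟨fun _ _ => 0, f, fun _ => contDiff_const, hf, fun p => by simp⟩
  | succ k ih =>
    obtain ⟨c, R, hc, hR, hfR⟩ := ih
    obtain ⟨g, hg, hRg⟩ := hR.exists_eq_add_fst_smul
    refine ⟨Function.update c k fun x => R (0, x), g, fun i => ?_, hg, fun p => ?_⟩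
    · rcases eq_or_ne i k with rfl | hi
      · rw [Function.update_self]
        exact hR.comp (contDiff_const.prodMk contDiff_id)
      · simpa [Function.update_of_ne hi] using hc i
    · rw [Finset.sum_range_succ, Function.update_self, Finset.sum_congr rfl fun i hi => by
          rw [Function.update_of_ne (Finset.mem_range.mp hi).ne], hfR p, hRg p, smul_add,
        smul_smul, pow_succ]
      abel

end Hadamard

theorem malgrange_division {n : ℕ} (f : ℝ × (Fin n → ℝ) → ℝ)
    (W : Set (ℝ × (Fin n → ℝ))) (hW : IsOpen W)
    (h0 : (0 : ℝ × (Fin n → ℝ)) ∈ W)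
    (hf : ContDiffOn ℝ (⊤ : ℕ∞) f W)
    (d : ℕ) (lam : ℕ → ℝ) (hlam : lam d ≠ 0) :
    ∃ (U : Set (ℝ × (Fin n → ℝ))) (V : Set (Fin n → ℝ))
      (Q : ℝ × (Fin n → ℝ) → ℝ) (r : ℕ → (Fin n → ℝ) → ℝ),
      IsOpen U ∧ (0 : ℝ × (Fin n → ℝ)) ∈ U ∧ U ⊆ W ∧
      IsOpen V ∧ (0 : Fin n → ℝ) ∈ V ∧
      ContDiffOn ℝ (⊤ : ℕ∞) Q U ∧
      (∀ i < d, ContDiffOn ℝ (⊤ : ℕ∞) (r i) V) ∧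
      (∀ q ∈ U, q.2 ∈ V ∧
        f q = Q q * (∑ i ∈ Finset.range (d + 1), lam i * q.1 ^ i)
          + ∑ i ∈ Finset.range d, r i q.2 * q.1 ^ i) := by
  obtain ⟨k, hkd, u, hu0, hP⟩ := exists_sum_range_eq_pow_mul hlam
  obtain ⟨ε, hε, hεW, g, hg, hgf⟩ := hf.exists_contDiff_eqOn_ball hW h0
  obtain ⟨c, R, hc, hR, hgR⟩ := hg.exists_eq_sum_fst_pow_smul_add d
  have hu : ContDiff ℝ ∞ fun p : ℝ × (Fin n → ℝ) => u.eval p.1 := by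
    have := u.contDiff_aeval (𝕜 := ℝ) ∞
    simp only [coe_aeval_eq_eval] at this
    exact this.comp contDiff_fst
  set U := ball 0 ε ∩ {p : ℝ × (Fin n → ℝ) | u.eval p.1 ≠ 0}
  have hU : IsOpen U := isOpen_ball.inter (isOpen_ne_fun hu.continuous continuous_const)
  refine ⟨U, univ, fun p => p.1 ^ (d - k) * R p / u.eval p.1, c, hU, ⟨mem_ball_self hε, hu0⟩,
    fun p hp => hεW hp.1, isOpen_univ, mem_univ _,
    ((contDiff_fst.pow _).mul hR).contDiffOn.div hu.contDiffOn fun p hp => hp.2,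
    fun i _ => (hc i).contDiffOn, fun p hp => ⟨mem_univ _, ?_⟩⟩
  have hQP : p.1 ^ (d - k) * R p / u.eval p.1 * (p.1 ^ k * u.eval p.1) = p.1 ^ d * R p := by
    have : u.eval p.1 ≠ 0 := hp.2
    rw [← pow_sub_mul_pow _ hkd]
    field_simp
  rw [← hgf hp.1, hgR p, hP, hQP, add_comm]
  simp only [smul_eq_mul, mul_comm]
end

section
/- Let U₂ be an open neighborhood of w̄ in ℝ^{n−1}, f : U₂ → ℝ a C^∞ function, and F a real-valued C^∞ function on an open neighborhood of (f(w̄), w̄) in ℝ × ℝ^{n−1} such that ∂F/∂t(f(w), w) = 0 for every w near w̄ (where t denotes the first variable). Then there exist an open neighborhood N of (f(w̄), w̄), an open neighborhood U₂′ ⊆ U₂ of w̄, a C^∞ function Q on N, and a C^∞ function k on U₂′ such that F(t, w) = (t − f(w))²·Q(t, w) + k(w) for all (t, w) ∈ N. -/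
open Set Filter Topology Metric MeasureTheory
open scoped ContDiff Convolution

/-!
Extend `F` and `f` to globally smooth `G` and `g`. Hadamard's lemma along the graph `t = g w`,
`G (t, w) = G (g w, w) + (t - g w) • H (t, w)` with `H (t, w) = ∫₀¹ ∂ₜG (g w + s (t - g w), w) ds`
and `H (g w, w) = ∂ₜG (g w, w)`, applied to `G` and then to `H`, gives
`G (t, w) = G (g w, w) + (t - g w) ∂ₜG (g w, w) + (t - g w)² Q (t, w)` with `Q` smooth, and the
middle term vanishes near `w̄` by hypothesis. Smoothness of such parametric integrals comes from
writing them as convolutions of the indicator of the interval with a smooth compactly supported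
function of the parameter.
-/

theorem ContDiffOn.exists_contDiff_eventuallyEq {E F : Type*} [NormedAddCommGroup E]
    [NormedSpace ℝ E] [HasContDiffBump E] [NormedAddCommGroup F] [NormedSpace ℝ F] {n : ℕ∞}
    {W : Set E} {f : E → F} (hf : ContDiffOn ℝ n f W) (hW : IsOpen W) {c : E} (hc : c ∈ W) :
    ∃ g : E → F, ContDiff ℝ n g ∧ g =ᶠ[𝓝 c] f := by
  obtain ⟨ε, hε, hball⟩ := nhds_basis_closedBall.mem_iff.1 (hW.mem_nhds hc)
  let χ : ContDiffBump c := ⟨ε / 2, ε, half_pos hε, half_lt_self hε⟩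
  refine ⟨fun x => χ x • f x, contDiff_iff_contDiffAt.2 fun x => ?_, ?_⟩
  · by_cases hx : x ∈ W
    · exact χ.contDiffAt.smul (hf.contDiffAt (hW.mem_nhds hx))
    · have hχx : x ∉ tsupport χ := by
        rw [χ.tsupport_eq]
        exact fun h => hx (hball h)
      refine (contDiffAt_const (c := (0 : F))).congr_of_eventuallyEq ?_
      filter_upwards [notMem_tsupport_iff_eventuallyEq.1 hχx] with y hy
      simp [show χ y = 0 from hy]
  · filter_upwards [χ.eventuallyEq_one] with x hx
    simp [show χ x = 1 from hx]

theorem contDiff_parametric_intervalIntegral {P E : Type*} [NormedAddCommGroup P]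
    [NormedSpace ℝ P] [NormedAddCommGroup E] [NormedSpace ℝ E] [CompleteSpace E] {n : ℕ∞}
    {h : P → ℝ → E} (hh : ContDiff ℝ n ↿h) (a b : ℝ) :
    ContDiff ℝ n fun p => ∫ s in a..b, h p s := by
  wlog hab : a ≤ b generalizing a b
  · simpa only [intervalIntegral.integral_symm a b, neg_neg] using (this b a (le_of_not_ge hab)).neg
  let ψ : ContDiffBump (0 : ℝ) := ⟨|a| + |b| + 1, |a| + |b| + 2, by positivity, by linarith⟩
  let g : P → ℝ → E := fun p y => ψ y • h p (-y)
  have hψ : ∀ s ∈ Ioc a b, ψ (-s) = 1 := by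
    intro s hs
    refine ψ.one_of_mem_closedBall ?_
    rw [mem_closedBall, dist_zero_right, norm_neg, Real.norm_eq_abs]
    exact abs_le.2 ⟨by linarith [neg_abs_le a, abs_nonneg b, hs.1],
      by linarith [le_abs_self b, abs_nonneg a, hs.2]⟩
  have hconv : ∀ p, ∫ s in a..b, h p s
      = ((Ioc a b).indicator 1 ⋆[ContinuousLinearMap.lsmul ℝ ℝ, volume] g p) 0 := by
    intro p
    rw [convolution_def, intervalIntegral.integral_of_le hab,
      ← integral_indicator measurableSet_Ioc]
    refine integral_congr_ae (ae_of_all _ fun s => ?_)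
    by_cases hs : s ∈ Ioc a b
    · simp [g, hs, hψ s hs]
    · simp [hs]
  simp_rw [hconv]
  rw [← contDiffOn_univ]
  refine contDiffOn_convolution_right_with_param_comp _ contDiffOn_const isOpen_univ
    (isCompact_closedBall 0 (|a| + |b| + 2)) (fun p y _ hy => ?_) ?_ ?_
  · have : ψ y = 0 := by
      rw [← ψ.tsupport_eq] at hy
      exact image_eq_zero_of_notMem_tsupport hy
    simp [g, this]
  · exact (integrableOn_const measure_Ioc_lt_top.ne).integrable_indicator measurableSet_Ioc
      |>.locallyIntegrable
  · exact ((ψ.contDiff.comp contDiff_snd).smul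
      (hh.comp (contDiff_fst.prodMk contDiff_snd.neg))).contDiffOn

section PartialDerivative

variable {V E : Type*} [NormedAddCommGroup V] [NormedSpace ℝ V] [NormedAddCommGroup E]
  [NormedSpace ℝ E]

theorem DifferentiableAt.hasDerivAt_comp_prodMk_left {G : ℝ × V → E} {t : ℝ} {w : V}
    (hG : DifferentiableAt ℝ G (t, w)) :
    HasDerivAt (fun s => G (s, w)) (fderiv ℝ G (t, w) (1, 0)) t :=
  hG.hasFDerivAt.comp_hasDerivAt t ((hasDerivAt_id t).prodMk (hasDerivAt_const t w))

variable [CompleteSpace E]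

theorem exists_contDiff_eq_add_sub_smul {G : ℝ × V → E} (hG : ContDiff ℝ ∞ G) {a : V → ℝ}
    (ha : ContDiff ℝ ∞ a) :
    ∃ H : ℝ × V → E, ContDiff ℝ ∞ H ∧ ∀ t w,
      G (t, w) = G (a w, w) + (t - a w) • H (t, w) ∧ H (a w, w) = fderiv ℝ G (a w, w) (1, 0) := by
  let D : ℝ × V → E := fun q => fderiv ℝ G q (1, 0)
  have hD : ContDiff ℝ ∞ D := (hG.fderiv_right le_rfl).clm_apply contDiff_const
  let γ : ℝ × V → ℝ → ℝ × V := fun q s => (a q.2 + s * (q.1 - a q.2), q.2)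
  have hγ : ContDiff ℝ ∞ ↿γ := by
    have haw : ContDiff ℝ ∞ fun p : (ℝ × V) × ℝ => a p.1.2 :=
      ha.comp (contDiff_snd.comp contDiff_fst)
    exact (haw.add (contDiff_snd.mul ((contDiff_fst.comp contDiff_fst).sub haw))).prodMk
      (contDiff_snd.comp contDiff_fst)
  refine ⟨fun q => ∫ s in (0 : ℝ)..1, D (γ q s),
    contDiff_parametric_intervalIntegral (hD.comp hγ) 0 1, fun t w => ⟨?_, by simp [γ, D]⟩⟩
  have hderiv : ∀ s, HasDerivAt (fun s => G (γ (t, w) s)) ((t - a w) • D (γ (t, w) s)) s := by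
    intro s
    have hline : HasDerivAt (fun s => a w + s * (t - a w)) (t - a w) s := by
      simpa using ((hasDerivAt_id s).mul_const (t - a w)).const_add (a w)
    exact ((hG.differentiable (by simp) _).hasDerivAt_comp_prodMk_left).scomp s hline
  have hcont : Continuous fun s => (t - a w) • D (γ (t, w) s) :=
    continuous_const.smul ((hD.comp hγ).continuous.comp (continuous_const.prodMk continuous_id))
  have hftc := intervalIntegral.integral_eq_sub_of_hasDerivAt (fun s _ => hderiv s)
    (hcont.intervalIntegrable 0 1)
  rw [intervalIntegral.integral_smul] at hftc
  simp only [γ, zero_mul, add_zero, one_mul, add_sub_cancel] at hftc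
  rw [hftc, add_sub_cancel]

theorem exists_contDiff_eq_add_sub_smul_add_sq_smul {G : ℝ × V → E} (hG : ContDiff ℝ ∞ G)
    {a : V → ℝ} (ha : ContDiff ℝ ∞ a) :
    ∃ Q : ℝ × V → E, ContDiff ℝ ∞ Q ∧ ∀ t w,
      G (t, w) = G (a w, w) + (t - a w) • fderiv ℝ G (a w, w) (1, 0) +
        (t - a w) ^ 2 • Q (t, w) := by
  obtain ⟨H, hH, hGH⟩ := exists_contDiff_eq_add_sub_smul hG ha
  obtain ⟨Q, hQ, hHQ⟩ := exists_contDiff_eq_add_sub_smul hH ha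
  refine ⟨Q, hQ, fun t w => ?_⟩
  rw [(hGH t w).1, (hHQ t w).1, (hGH (a w) w).2, smul_add, smul_smul, ← add_assoc, sq]

end PartialDerivative

theorem quadratic_division_lemma {m : ℕ} (wb : Fin m → ℝ)
    (U₂ : Set (Fin m → ℝ)) (hU₂ : IsOpen U₂) (hwb : wb ∈ U₂)
    (f : (Fin m → ℝ) → ℝ) (hf : ContDiffOn ℝ (⊤ : ℕ∞) f U₂)
    (F : ℝ × (Fin m → ℝ) → ℝ)
    (W : Set (ℝ × (Fin m → ℝ))) (hW : IsOpen W) (hmem : (f wb, wb) ∈ W)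
    (hF : ContDiffOn ℝ (⊤ : ℕ∞) F W)
    (hcrit : ∀ᶠ w in nhds wb, deriv (fun t => F (t, w)) (f w) = 0) :
    ∃ (N : Set (ℝ × (Fin m → ℝ))) (U₂' : Set (Fin m → ℝ))
      (Q : ℝ × (Fin m → ℝ) → ℝ) (k : (Fin m → ℝ) → ℝ),
      IsOpen N ∧ (f wb, wb) ∈ N ∧ N ⊆ W ∧
      IsOpen U₂' ∧ wb ∈ U₂' ∧ U₂' ⊆ U₂ ∧
      ContDiffOn ℝ (⊤ : ℕ∞) Q N ∧ ContDiffOn ℝ (⊤ : ℕ∞) k U₂' ∧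
      ∀ q ∈ N, F q = (q.1 - f q.2) ^ 2 * Q q + k q.2 := by
  obtain ⟨G, hG, hGF⟩ := hF.exists_contDiff_eventuallyEq hW hmem
  obtain ⟨g, hg, hgf⟩ := hf.exists_contDiff_eventuallyEq hU₂ hwb
  obtain ⟨Q, hQ, hGQ⟩ := exists_contDiff_eq_add_sub_smul_add_sq_smul hG hg
  obtain ⟨O, hGFO, hO, hcO⟩ := _root_.eventually_nhds_iff.1 (hGF.and (hW.mem_nhds hmem))
  have hgraph : ∀ᶠ w in 𝓝 wb, g w = f w ∧ deriv (fun t => F (t, w)) (f w) = 0 ∧ (g w, w) ∈ O := by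
    have hgraphO : (g wb, wb) ∈ O := by simpa [hgf.self_of_nhds] using hcO
    exact hgf.and (hcrit.and ((hg.continuous.prodMk continuous_id).continuousAt.preimage_mem_nhds
      (hO.mem_nhds hgraphO)))
  obtain ⟨U, hU, hUo, hwbU⟩ := _root_.eventually_nhds_iff.1 hgraph
  refine ⟨O ∩ Prod.snd ⁻¹' U, U₂, Q, fun w => G (g w, w), hO.inter (hUo.preimage continuous_snd),
    ⟨hcO, hwbU⟩, fun q hq => (hGFO q hq.1).2, hU₂, hwb, subset_rfl, hQ.contDiffOn,
    (hG.comp (hg.prodMk contDiff_id)).contDiffOn, ?_⟩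
  rintro ⟨t, w⟩ ⟨htwO, hwU⟩
  obtain ⟨hgw, hcritw, hgwO⟩ := hU w hwU
  have hGF_line : (fun s => G (s, w)) =ᶠ[𝓝 (g w)] fun s => F (s, w) := by
    filter_upwards [(continuous_id.prodMk continuous_const).continuousAt.preimage_mem_nhds
      (hO.mem_nhds hgwO)] with s hs using (hGFO _ hs).1
  have hpartial : fderiv ℝ G (g w, w) (1, 0) = 0 := by
    rw [← hcritw, ← hgw]
    exact ((hG.differentiable (by simp) _).hasDerivAt_comp_prodMk_left.congr_of_eventuallyEq
      hGF_line.symm).deriv.symm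
  show F (t, w) = (t - f w) ^ 2 * Q (t, w) + G (g w, w)
  rw [← (hGFO _ htwO).1, hGQ t w, hpartial, hgw, smul_zero, add_zero, smul_eq_mul, add_comm]
end

section
/- Let U₂ be an open neighborhood of w̄ in ℝ^{n−1}, f : U₂ → ℝ a C^∞ function, and F a real-valued C^∞ function on an open neighborhood of (f(w̄), w̄) in ℝ × ℝ^{n−1} such that ∂F/∂t(f(w), w) = 0 and ∂²F/∂t²(f(w), w) = 0 for every w near w̄ (where t denotes the first variable). Then there exist an open neighborhood N of (f(w̄), w̄), an open neighborhood U₂′ ⊆ U₂ of w̄, a C^∞ function Q on N, and a C^∞ function k on U₂′ such that F(t, w) = (t − f(w))³·Q(t, w) + k(w) for all (t, w) ∈ N. -/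
/-!
Taylor's formula with integral remainder in `t`, around `t = f w`, reads
`F (t, w) = F (f w, w) + (t - f w) ∂ₜF (f w, w) + (t - f w)² / 2 ∂ₜ²F (f w, w)
  + (t - f w)³ Q (t, w)` with `Q (t, w) = ∫₀¹ (1 - s)² / 2 ∂ₜ³F (f w + s (t - f w), w) ds`.
The two middle terms vanish by hypothesis, and `Q` is smooth by differentiation under the integral
sign. To make the integrand globally defined and smooth, `F` and `f` are first replaced, via a bump
function, by smooth functions on the whole space that agree with them on closed balls around the
base point.
-/

open Set Filter Metric MeasureTheory Function
open scoped Topology ContDiff Manifold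

theorem ContDiffOn.exists_contDiff_eqOn {E F : Type*} [NormedAddCommGroup E] [NormedSpace ℝ E]
    [FiniteDimensional ℝ E] [NormedAddCommGroup F] [NormedSpace ℝ F] {n : ℕ∞} {g : E → F}
    {U K : Set E} (hg : ContDiffOn ℝ n g U) (hU : IsOpen U) (hK : IsClosed K) (hKU : K ⊆ U) :
    ∃ g' : E → F, ContDiff ℝ n g' ∧ EqOn g' g K := by
  obtain ⟨χ, hχ0, hχ1, -⟩ := exists_contMDiffMap_zero_one_nhds_of_isClosed 𝓘(ℝ, E) (n := n)
    hU.isClosed_compl hK (disjoint_compl_left_iff_subset.2 hKU)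
  have hχ : ContDiff ℝ n χ := χ.contMDiff.contDiff
  refine ⟨fun x => χ x • g x, contDiff_iff_contDiffAt.2 fun x => ?_, fun x hx => ?_⟩
  · by_cases hx : x ∈ U
    · exact hχ.contDiffAt.smul (hg.contDiffAt (hU.mem_nhds hx))
    · refine contDiffAt_const (c := 0).congr_of_eventuallyEq ?_
      filter_upwards [nhds_le_nhdsSet hx hχ0] with y hy
      rw [hy, zero_smul]
  · simp [hχ1.self_of_nhdsSet x hx]

theorem taylor_two_integral_remainder {F : Type*} [NormedAddCommGroup F] [NormedSpace ℝ F]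
    [CompleteSpace F] {g : ℝ → F} (hg : ContDiff ℝ 3 g) (a t : ℝ) :
    g t = g a + (t - a) • deriv g a + ((t - a) ^ 2 / 2) • iteratedDeriv 2 g a +
      (t - a) ^ 3 • ∫ s in (0 : ℝ)..1, ((1 - s) ^ 2 / 2) • iteratedDeriv 3 g (a + s * (t - a)) := by
  have h := map_add_eq_sum_add_integral_iteratedFDeriv (f := g) (x := a) (y := t - a) (n := 2)
    fun _ _ => hg.contDiffAt
  simp only [Finset.sum_range_succ, Finset.sum_range_zero,
    iteratedFDeriv_apply_eq_iteratedDeriv_mul_prod, Finset.prod_const, Finset.card_univ,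
    Fintype.card_fin, smul_eq_mul, iteratedDeriv_zero, iteratedDeriv_one, add_sub_cancel] at h
  rw [h, ← intervalIntegral.integral_smul, ← intervalIntegral.integral_smul]
  simp only [Nat.factorial, smul_smul]
  congr 1
  · module
  · congr 1
    ext s
    module

section ParametricIntegral

universe u

-- `H` and `G` share a universe because the induction passes from `G` to `H →L[ℝ] G`.
variable {H G : Type u} [NormedAddCommGroup H] [NormedSpace ℝ H] [ProperSpace H]
  [NormedAddCommGroup G] [NormedSpace ℝ G] {φ : H → ℝ → G} {a b : ℝ}

theorem hasFDerivAt_intervalIntegral_of_contDiff (hφ : ContDiff ℝ 1 (uncurry φ)) (x₀ : H) :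
    HasFDerivAt (fun x => ∫ s in a..b, φ x s)
      (∫ s in a..b, (fderiv ℝ (uncurry φ) (x₀, s)).comp (ContinuousLinearMap.inl ℝ H ℝ)) x₀ := by
  have hφ' : Continuous fun p => (fderiv ℝ (uncurry φ) p).comp (ContinuousLinearMap.inl ℝ H ℝ) :=
    (hφ.continuous_fderiv one_ne_zero).clm_comp continuous_const
  obtain ⟨C, hC⟩ := ((isCompact_closedBall x₀ 1).prod isCompact_uIcc).exists_bound_of_continuousOn
    hφ'.continuousOn
  refine intervalIntegral.hasFDerivAt_integral_of_dominated_of_fderiv_le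
    (F' := fun x s => (fderiv ℝ (uncurry φ) (x, s)).comp (ContinuousLinearMap.inl ℝ H ℝ))
    (bound := fun _ => C) (ball_mem_nhds x₀ one_pos)
    (.of_forall fun x => (hφ.continuous.uncurry_left x).aestronglyMeasurable)
    ((hφ.continuous.uncurry_left x₀).intervalIntegrable a b)
    (hφ'.comp (by fun_prop : Continuous fun s : ℝ => (x₀, s))).aestronglyMeasurable
    (ae_of_all _ fun s hs x hx => hC (x, s) ⟨ball_subset_closedBall hx, uIoc_subset_uIcc hs⟩)
    intervalIntegrable_const (ae_of_all _ fun s _ x _ => ?_)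
  exact HasFDerivAt.comp (g := uncurry φ) x (hφ.differentiable one_ne_zero (x, s)).hasFDerivAt
    (hasFDerivAt_prodMk_left (𝕜 := ℝ) x s)

theorem contDiff_intervalIntegral_of_contDiff_nat {n : ℕ} (hφ : ContDiff ℝ n (uncurry φ)) :
    ContDiff ℝ n fun x => ∫ s in a..b, φ x s := by
  induction n generalizing G with
  | zero =>
    exact contDiff_zero.2 <|
      intervalIntegral.continuous_parametric_intervalIntegral_of_continuous' hφ.continuous a b
  | succ n ih =>
    refine contDiff_succ_iff_hasFDerivAt.2 ⟨_, ?_,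
      hasFDerivAt_intervalIntegral_of_contDiff (hφ.of_le (by norm_cast; omega))⟩
    exact ih (φ := fun x s => (fderiv ℝ (uncurry φ) (x, s)).comp (ContinuousLinearMap.inl ℝ H ℝ))
      ((hφ.fderiv_right le_rfl).clm_comp contDiff_const)

theorem contDiff_intervalIntegral_of_contDiff {n : ℕ∞} (hφ : ContDiff ℝ n (uncurry φ)) :
    ContDiff ℝ n fun x => ∫ s in a..b, φ x s :=
  contDiff_iff_forall_nat_le.2 fun _ hk =>
    contDiff_intervalIntegral_of_contDiff_nat (hφ.of_le (by exact_mod_cast hk))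

end ParametricIntegral

section PartialDeriv

variable {E G : Type*} [NormedAddCommGroup E] [NormedSpace ℝ E] [NormedAddCommGroup G]
  [NormedSpace ℝ G]

theorem DifferentiableAt.deriv_fst_eq_fderiv {Φ : ℝ × E → G} {p : ℝ × E}
    (h : DifferentiableAt ℝ Φ p) : deriv (fun t => Φ (t, p.2)) p.1 = fderiv ℝ Φ p (1, 0) :=
  (h.hasFDerivAt.comp_hasDerivAt p.1
    ((hasDerivAt_id p.1).prodMk (hasDerivAt_const p.1 p.2))).deriv

theorem ContDiff.iteratedDeriv_fst {Φ : ℝ × E → G} (hΦ : ContDiff ℝ ∞ Φ) (k : ℕ) :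
    ContDiff ℝ ∞ fun p : ℝ × E => iteratedDeriv k (fun t => Φ (t, p.2)) p.1 := by
  induction k with
  | zero => simpa only [iteratedDeriv_zero] using hΦ
  | succ k ih =>
    simp only [iteratedDeriv_succ, fun p => (ih.differentiable (by simp) p).deriv_fst_eq_fderiv]
    exact (ih.fderiv_right (by simp)).clm_apply contDiff_const

end PartialDeriv

section CubicQuotient

variable {E : Type} [NormedAddCommGroup E] [NormedSpace ℝ E]

noncomputable def cubicQuotient (G : ℝ × E → ℝ) (g : E → ℝ) (q : ℝ × E) : ℝ :=
  ∫ s in (0 : ℝ)..1,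
    (1 - s) ^ 2 / 2 * iteratedDeriv 3 (fun t => G (t, q.2)) (g q.2 + s * (q.1 - g q.2))

theorem ContDiff.cubicQuotient [ProperSpace E] {G : ℝ × E → ℝ} {g : E → ℝ}
    (hG : ContDiff ℝ ∞ G) (hg : ContDiff ℝ ∞ g) : ContDiff ℝ ∞ (cubicQuotient G g) := by
  have hpath : ContDiff ℝ ∞ fun p : (ℝ × E) × ℝ => (g p.1.2 + p.2 * (p.1.1 - g p.1.2), p.1.2) := by
    fun_prop
  have hweight : ContDiff ℝ ∞ fun p : (ℝ × E) × ℝ => (1 - p.2) ^ 2 / 2 := by fun_prop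
  exact contDiff_intervalIntegral_of_contDiff (hweight.mul ((hG.iteratedDeriv_fst 3).comp hpath))

theorem eq_cube_mul_cubicQuotient_add {G : ℝ × E → ℝ} (hG : ContDiff ℝ 3 G) (g : E → ℝ)
    {w : E} (h₁ : deriv (fun t => G (t, w)) (g w) = 0)
    (h₂ : iteratedDeriv 2 (fun t => G (t, w)) (g w) = 0) (t : ℝ) :
    G (t, w) = (t - g w) ^ 3 * cubicQuotient G g (t, w) + G (g w, w) := by
  rw [taylor_two_integral_remainder (g := fun t => G (t, w)) (hG.comp (by fun_prop)) (g w) t,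
    h₁, h₂, cubicQuotient]
  simp only [smul_eq_mul]
  ring

end CubicQuotient

theorem cubic_division_lemma {m : ℕ} (wb : Fin m → ℝ)
    (U₂ : Set (Fin m → ℝ)) (hU₂ : IsOpen U₂) (hwb : wb ∈ U₂)
    (f : (Fin m → ℝ) → ℝ) (hf : ContDiffOn ℝ (⊤ : ℕ∞) f U₂)
    (F : ℝ × (Fin m → ℝ) → ℝ)
    (W : Set (ℝ × (Fin m → ℝ))) (hW : IsOpen W) (hmem : (f wb, wb) ∈ W)
    (hF : ContDiffOn ℝ (⊤ : ℕ∞) F W)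
    (hcrit : ∀ᶠ w in nhds wb, deriv (fun t => F (t, w)) (f w) = 0 ∧
      deriv (deriv (fun t => F (t, w))) (f w) = 0) :
    ∃ (N : Set (ℝ × (Fin m → ℝ))) (U₂' : Set (Fin m → ℝ))
      (Q : ℝ × (Fin m → ℝ) → ℝ) (k : (Fin m → ℝ) → ℝ),
      IsOpen N ∧ (f wb, wb) ∈ N ∧ N ⊆ W ∧
      IsOpen U₂' ∧ wb ∈ U₂' ∧ U₂' ⊆ U₂ ∧
      ContDiffOn ℝ (⊤ : ℕ∞) Q N ∧ ContDiffOn ℝ (⊤ : ℕ∞) k U₂' ∧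
      ∀ q ∈ N, F q = (q.1 - f q.2) ^ 3 * Q q + k q.2 := by
  obtain ⟨ρ, hρ, hρW⟩ := nhds_basis_closedBall.mem_iff.1 (hW.mem_nhds hmem)
  have hball : ∀ {t w}, dist t (f wb) < ρ → dist w wb < ρ → (t, w) ∈ closedBall (f wb, wb) ρ :=
    fun ht hw => by rw [← closedBall_prod_same]; exact ⟨ht.le, hw.le⟩
  obtain ⟨G, hG, hGF⟩ := hF.exists_contDiff_eqOn hW isClosed_closedBall hρW
  have hnear : ∀ᶠ w in 𝓝 wb, w ∈ U₂ ∧ (deriv (fun t => F (t, w)) (f w) = 0 ∧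
      deriv (deriv (fun t => F (t, w))) (f w) = 0) ∧ dist (f w) (f wb) < ρ ∧ dist w wb < ρ := by
    filter_upwards [hU₂.mem_nhds hwb, hcrit, ball_mem_nhds wb hρ,
      hf.continuousOn.continuousAt (hU₂.mem_nhds hwb) (ball_mem_nhds _ hρ)] with w hwU hw hwρ hfw
    exact ⟨hwU, hw, hfw, hwρ⟩
  obtain ⟨r, hr, hr_near⟩ := nhds_basis_closedBall.eventually_iff.1 hnear
  obtain ⟨g, hg, hgf⟩ := hf.exists_contDiff_eqOn hU₂ isClosed_closedBall fun w hw => (hr_near hw).1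
  refine ⟨ball (f wb) ρ ×ˢ ball wb r, ball wb r, cubicQuotient G g, fun w => G (g w, w),
    isOpen_ball.prod isOpen_ball, ⟨mem_ball_self hρ, mem_ball_self hr⟩, ?_, isOpen_ball,
    mem_ball_self hr, fun w hw => (hr_near (ball_subset_closedBall hw)).1,
    (hG.cubicQuotient hg).contDiffOn,
    (hG.comp (hg.prodMk contDiff_id)).contDiffOn, ?_⟩
  · rintro ⟨t, w⟩ ⟨ht, hw⟩
    exact hρW (hball ht (hr_near (ball_subset_closedBall hw)).2.2.2)
  · rintro ⟨t, w⟩ ⟨ht, hw⟩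
    obtain ⟨-, ⟨hd1, hd2⟩, hfw, hw'⟩ := hr_near (ball_subset_closedBall hw)
    have hloc : (fun t => G (t, w)) =ᶠ[𝓝 (f w)] fun t => F (t, w) := by
      filter_upwards [isOpen_ball.mem_nhds hfw] with t' ht'
      exact hGF (hball ht' hw')
    have hgw : g w = f w := hgf (ball_subset_closedBall hw)
    show F (t, w) = (t - f w) ^ 3 * _ + G (g w, w)
    rw [← hGF (hball ht hw'), ← hgw]
    refine eq_cube_mul_cubicQuotient_add (hG.of_le ENat.LEInfty.out) g ?_ ?_ t
    · rw [hgw, hloc.deriv_eq, hd1]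
    · rw [hgw, hloc.iteratedDeriv_eq, iteratedDeriv_succ, iteratedDeriv_one, hd2]
end

section
/- Let A be an invertible n × n real matrix, c, c′ ∈ ℝ^n, d ∈ ℝ, and set A′ = (Aᵀ)⁻¹, b′ = A′c, b = Ac′. Define the affine Legendre equivalence 𝓛_F : ℝ^n × ℝ^n × ℝ → ℝ^n × ℝ^n × ℝ by 𝓛_F(x, p, z) = (Ax + b, A′p + b′, z + ⟨c, x⟩ + d). Then for every point q = (x, p, z) and every tangent vector ξ ∈ ℝ^n × ℝ^n × ℝ, one has θ_{𝓛_F(q)}((D𝓛_F)_q ξ) = θ_q(ξ), where (D𝓛_F)_q is the Fréchet derivative of 𝓛_F at q; that is, 𝓛_F*θ = θ, so 𝓛_F preserves the contact structure. -/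
open Matrix

/-!
Statement 16: an affine Legendre equivalence
`𝓛_F(x,p,z) = (Ax + b, A'p + b', z + ⟨c,x⟩ + d)` with `A' = (Aᵀ)⁻¹`,
`b' = A'c`, `b = Ac'` preserves the standard contact form:
`θ_{𝓛_F(q)}((D𝓛_F)_q ξ) = θ_q(ξ)`.
-/

/-- Euclidean pairing on `ℝ^n`. -/
def dotR {n : ℕ} (p u : Fin n → ℝ) : ℝ := ∑ i, p i * u i

/-- The standard contact form: at the point `q = (x,p,z)` it sends the tangent
vector `ξ = (u,v,w)` to `w - ⟨p,u⟩`. -/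
def theta {n : ℕ} (q ξ : (Fin n → ℝ) × (Fin n → ℝ) × ℝ) : ℝ :=
  ξ.2.2 - dotR q.2.1 ξ.1

/-- The affine Legendre equivalence `𝓛_F`. -/
def LF {n : ℕ} (A A' : Matrix (Fin n) (Fin n) ℝ) (b b' c : Fin n → ℝ) (d : ℝ)
    (q : (Fin n → ℝ) × (Fin n → ℝ) × ℝ) : (Fin n → ℝ) × (Fin n → ℝ) × ℝ :=
  (A.mulVec q.1 + b, A'.mulVec q.2.1 + b', q.2.2 + dotR c q.1 + d)

lemma dotR_eq {n : ℕ} (p u : Fin n → ℝ) : dotR p u = p ⬝ᵥ u := rfl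

/-- The linear part of `LF` as a linear map. -/
def LFlin {n : ℕ} (A A' : Matrix (Fin n) (Fin n) ℝ) (c : Fin n → ℝ) :
    ((Fin n → ℝ) × (Fin n → ℝ) × ℝ) →ₗ[ℝ] ((Fin n → ℝ) × (Fin n → ℝ) × ℝ) where
  toFun q := (A.mulVec q.1, A'.mulVec q.2.1, q.2.2 + dotR c q.1)
  map_add' q r := by
    simp only [dotR_eq, Prod.fst_add, Prod.snd_add, mulVec_add, dotProduct_add,
      Prod.mk_add_mk]
    ring_nf
  map_smul' t q := by
    simp only [dotR_eq, Prod.smul_fst, Prod.smul_snd, mulVec_smul, dotProduct_smul,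
      Prod.smul_mk, RingHom.id_apply, smul_eq_mul]
    ring_nf

lemma LF_eq {n : ℕ} (A A' : Matrix (Fin n) (Fin n) ℝ) (b b' c : Fin n → ℝ) (d : ℝ) :
    LF A A' b b' c d =
      fun q => (LFlin A A' c).toContinuousLinearMap q + (b, b', d) := by
  funext q
  simp [LF, LFlin, Prod.ext_iff]

lemma fderiv_LF {n : ℕ} (A A' : Matrix (Fin n) (Fin n) ℝ) (b b' c : Fin n → ℝ) (d : ℝ)
    (q : (Fin n → ℝ) × (Fin n → ℝ) × ℝ) :
    fderiv ℝ (LF A A' b b' c d) q = (LFlin A A' c).toContinuousLinearMap := by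
  rw [LF_eq]
  exact (((LFlin A A' c).toContinuousLinearMap.hasFDerivAt (x := q)).add_const _).fderiv

theorem affine_legendre_equivalence_contact {n : ℕ}
    (A : Matrix (Fin n) (Fin n) ℝ) (hA : IsUnit A.det)
    (c c' : Fin n → ℝ) (d : ℝ) :
    ∀ (q ξ : (Fin n → ℝ) × (Fin n → ℝ) × ℝ),
      theta (LF A (Aᵀ)⁻¹ (A.mulVec c') ((Aᵀ)⁻¹.mulVec c) c d q)
          (fderiv ℝ (LF A (Aᵀ)⁻¹ (A.mulVec c') ((Aᵀ)⁻¹.mulVec c) c d) q ξ)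
        = theta q ξ := by
  intro q ξ
  rw [fderiv_LF]
  have hAT : IsUnit Aᵀ.det := by rwa [Matrix.det_transpose]
  have key : ∀ y u : Fin n → ℝ, ((Aᵀ)⁻¹.mulVec y) ⬝ᵥ (A.mulVec u) = y ⬝ᵥ u := by
    intro y u
    rw [dotProduct_mulVec, ← mulVec_transpose, mulVec_mulVec,
      Matrix.mul_nonsing_inv _ hAT, one_mulVec]
  simp only [theta, LF, LFlin, LinearMap.coe_toContinuousLinearMap',
    LinearMap.coe_mk, AddHom.coe_mk, dotR_eq, add_dotProduct, dotProduct_add, key]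
  ring
end
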